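/- arXiv:1602.03109 — 6 statements merged into one kernel-verified Lean document; each statement's English description precedes it below -/
import Mathlib

section
/- Let f : {0,1}^n → {0,1}^n be a Boolean network and let I be a feedback vertex set of its interaction graph G. Then for all fixed points x, y of f, x = y if and only if x_I = y_I (the restrictions of x and y to the coordinates in I coincide). In particular, f has at most 2^{|I|} fixed points. -/
open Classical

section Defs

variable {V : Type*}

/-- `f_v` depends on input `u`. -/
def Depends (f : (V → Bool) → V → Bool) (u v : V) : Prop :=
  ∃ x y : V → Bool, (∀ w, w ≠ u → x w = y w) ∧ f x v ≠ f y v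

/-- The arcs of a cycle given by the list of its vertices `v₀ … v_m`:
`(v₀,v₁), …, (v_m, v₀)`. -/
def CycArcs (l : List V) : List (V × V) :=
  (l ++ l.take 1).zip ((l ++ l.take 1).tail)

/-- A (directed) cycle of the digraph `G`, given by its list of (distinct) vertices.
Loops (cycles of length one) are allowed. -/
def IsCycle (G : V → V → Prop) (l : List V) : Prop :=
  l ≠ [] ∧ l.Nodup ∧ ∀ a ∈ CycArcs l, G a.1 a.2

/-- The arcs of a path given by the list of its vertices. -/
def PathArcs (l : List V) : List (V × V) := l.zip l.tail

/-- A (directed) path of `G` with at least one arc, with distinct vertices except that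
the first and last vertex may coincide. -/
def IsPath (G : V → V → Prop) (l : List V) : Prop :=
  2 ≤ l.length ∧ l.dropLast.Nodup ∧ l.tail.Nodup ∧ ∀ a ∈ PathArcs l, G a.1 a.2

/-- A packing: a collection of pairwise vertex-disjoint cycles. -/
def IsPacking (G : V → V → Prop) (P : List (List V)) : Prop :=
  (∀ l ∈ P, IsCycle G l) ∧ P.Pairwise fun l₁ l₂ => ∀ v ∈ l₁, v ∉ l₂

/-- A feedback vertex set: a set of vertices meeting every cycle. -/
def IsFVS (G : V → V → Prop) (I : Finset V) : Prop :=
  ∀ l : List V, IsCycle G l → ∃ v ∈ l, v ∈ I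

/-- `τ(G)`: minimum size of a feedback vertex set. -/
noncomputable def tau [Fintype V] (G : V → V → Prop) : ℕ :=
  sInf {k | ∃ I : Finset V, IsFVS G I ∧ I.card = k}

/-- `ν(G)`: maximum number of pairwise vertex-disjoint cycles. -/
noncomputable def nu (G : V → V → Prop) : ℕ :=
  sSup {k | ∃ P : List (List V), IsPacking G P ∧ P.length = k}

/-- A source: a vertex of in-degree zero. -/
def IsSource (G : V → V → Prop) (v : V) : Prop := ∀ u, ¬ G u v

/-- A principal path w.r.t. a packing `P`: a path none of whose arcs and none of whose
internal vertices belong to a cycle of the packing. -/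
def IsPrincipal (G : V → V → Prop) (P : List (List V)) (l : List V) : Prop :=
  IsPath G l ∧ (∀ a ∈ PathArcs l, ∀ C ∈ P, a ∉ CycArcs C) ∧
    ∀ v ∈ l.tail.dropLast, ∀ C ∈ P, v ∉ C

/-- There is a principal path (w.r.t. packing `P`) from a vertex satisfying `A` to `v`. -/
def PrincipalFrom (G : V → V → Prop) (P : List (List V)) (A : V → Prop) (v : V) : Prop :=
  ∃ l : List V, IsPrincipal G P l ∧ (∃ u, l.head? = some u ∧ A u) ∧ l.getLast? = some v

/-- A special packing. -/
def IsSpecialPacking (G : V → V → Prop) (P : List (List V)) : Prop :=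
  IsPacking G P ∧
    ∀ Ci ∈ P, ∀ v ∈ Ci,
      (∃ Cj ∈ P, Cj ≠ Ci ∧ PrincipalFrom G P (fun u => u ∈ Cj) v) →
      (PrincipalFrom G P (fun u => u ∈ Ci) v ∨ PrincipalFrom G P (IsSource G) v)

/-- `ν*(G)`: maximum size of a special packing. -/
noncomputable def nuStar (G : V → V → Prop) : ℕ :=
  sSup {k | ∃ P : List (List V), IsSpecialPacking G P ∧ P.length = k}

/-- Two vertex-disjoint cycles are independent if there is no arc between them. -/
def Independent (G : V → V → Prop) (C₁ C₂ : List V) : Prop :=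
  (∀ v ∈ C₁, v ∉ C₂) ∧ ∀ u ∈ C₁, ∀ v ∈ C₂, ¬ G u v ∧ ¬ G v u

/-- The arc `uv` is positive. -/
def PosArc [DecidableEq V] (f : (V → Bool) → V → Bool) (u v : V) : Prop :=
  ∀ x : V → Bool, x u = false → f x v ≤ f (Function.update x u true) v

/-- The arc `uv` is negative. -/
def NegArc [DecidableEq V] (f : (V → Bool) → V → Bool) (u v : V) : Prop :=
  ∀ x : V → Bool, x u = false → f (Function.update x u true) v ≤ f x v

/-- The sign of the arc `uv` in the signed interaction graph of `f`. -/
noncomputable def arcSign [DecidableEq V] (f : (V → Bool) → V → Bool) (u v : V) : ℤ :=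
  if PosArc f u v then 1 else if NegArc f u v then -1 else 0

/-- The sign of a cycle: product of the signs of its arcs. -/
def CycleSign (σ : V → V → ℤ) (l : List V) : ℤ :=
  ((CycArcs l).map fun a => σ a.1 a.2).prod

/-- `ν⁺(G,σ)`: maximum number of pairwise vertex-disjoint non-negative cycles. -/
noncomputable def nuPlus (G : V → V → Prop) (σ : V → V → ℤ) : ℕ :=
  sSup {k | ∃ P : List (List V),
    IsPacking G P ∧ (∀ C ∈ P, 0 ≤ CycleSign σ C) ∧ P.length = k}

/-- A monotone feedback vertex set of `(G,σ)`. -/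
def IsMonFVS (G : V → V → Prop) (σ : V → V → ℤ) (J : Finset V) : Prop :=
  IsFVS G J ∧ ∀ u v, G u v → σ u v ≠ 1 → v ∈ J

/-- `τ_m(G,σ)`: minimum size of a monotone feedback vertex set. -/
noncomputable def tauM [Fintype V] (G : V → V → Prop) (σ : V → V → ℤ) : ℕ :=
  sInf {k | ∃ J : Finset V, IsMonFVS G σ J ∧ J.card = k}

/-- The `I`-switch of the arc-labelling `σ`. -/
noncomputable def switchSign (σ : V → V → ℤ) (I : Finset V) (u v : V) : ℤ :=
  if ((u ∈ I) ↔ (v ∈ I)) then σ u v else -σ u v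

/-- `τ*_m(G,σ)`: minimum of `τ_m` over all switches of `(G,σ)`. -/
noncomputable def tauMStar [Fintype V] (G : V → V → Prop) (σ : V → V → ℤ) : ℕ :=
  sInf {k | ∃ I : Finset V, tauM G (switchSign σ I) = k}

end Defs

section Patterns

variable {m : Type*}

/-- A `k`-pattern in `P ⊆ {0,1}^m`. -/
def IsPattern (P : Set (m → Bool)) (k : ℕ) (X Y : Fin k → m → Bool) : Prop :=
  Function.Injective X ∧ Function.Injective Y ∧
    (∀ p, X p ∈ P) ∧ (∀ p, Y p ∈ P) ∧ ∀ p q, X p ≤ Y q ↔ p ≠ q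

/-- `P` has a `k`-pattern. -/
def HasPattern (P : Set (m → Bool)) (k : ℕ) : Prop :=
  ∃ X Y, IsPattern P k X Y

/-- `P` has a special `k`-pattern: a `k`-pattern with `y^p = complement of x^p`. -/
def HasSpecialPattern (P : Set (m → Bool)) (k : ℕ) : Prop :=
  ∃ X Y, IsPattern P k X Y ∧ ∀ p, Y p = fun v => !(X p v)

end Patterns

section Aux

variable {V : Type*}

lemma cycle_of_fun {G : V → V → Prop} (h : ℕ → V) (d : ℕ) (hd : 0 < d)
    (hinj : ∀ a < d, ∀ b < d, h a = h b → a = b)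
    (harc : ∀ t, t + 1 < d → G (h t) (h (t + 1)))
    (hwrap : G (h (d - 1)) (h 0)) :
    IsCycle G ((List.range d).map h) := by
  set l : List V := (List.range d).map h with hl
  have hlen : l.length = d := by simp [hl]
  have htake : l.take 1 = [h 0] := by
    obtain ⟨d', rfl⟩ : ∃ d', d = d' + 1 := ⟨d - 1, by omega⟩
    simp [hl, List.range_succ_eq_map]
  have hgetl : ∀ t (ht : t < d), l[t]'(by omega) = h t := by
    intro t ht; simp [hl]
  refine ⟨by simp [hl]; omega, ?_, ?_⟩
  · apply List.Nodup.map_on _ List.nodup_range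
    intro a ha b hb hab
    exact hinj a (List.mem_range.mp ha) b (List.mem_range.mp hb) hab
  · intro a ha
    unfold CycArcs at ha
    set l' : List V := l ++ l.take 1 with hl'
    have hlen' : l'.length = d + 1 := by simp [hl', htake, hlen]
    have hget : ∀ t (ht : t < d + 1), l'[t]'(by omega) =
        if htd : t < d then h t else h 0 := by
      intro t ht
      by_cases htd : t < d
      · rw [dif_pos htd]
        exact (List.getElem_append_left (by omega)).trans (hgetl t htd)
      · have hte : t = d := by omega
        subst hte
        rw [dif_neg htd]
        refine (List.getElem_append_right (by omega)).trans ?_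
        simp [htake, hlen]
    rw [List.mem_iff_getElem] at ha
    obtain ⟨t, htlt, hta⟩ := ha
    have htd : t < d := by
      have := List.length_zip (l₁ := l') (l₂ := l'.tail)
      simp [hlen'] at htlt
      omega
    have h1 : (l'.zip l'.tail)[t]'htlt =
        (l'[t]'(by omega), l'.tail[t]'(by simp [hlen']; omega)) := List.getElem_zip ..
    have h2 : l'.tail[t]'(by simp [hlen']; omega) = l'[t+1]'(by omega) :=
      List.getElem_tail ..
    rw [h1, h2, hget t (by omega), hget (t+1) (by omega)] at hta
    subst hta
    by_cases ht1 : t + 1 < d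
    · simp only [dif_pos htd, dif_pos ht1]
      exact harc t ht1
    · have : t = d - 1 := by omega
      subst this
      simp only [dif_pos htd, dif_neg ht1]
      exact hwrap

end Aux

lemma exists_depends {n : ℕ} (f : (Fin n → Bool) → Fin n → Bool) (v : Fin n) :
    ∀ k (x y : Fin n → Bool), (Finset.univ.filter fun u => x u ≠ y u).card ≤ k →
      f x v ≠ f y v → ∃ u, x u ≠ y u ∧ Depends f u v := by
  intro k
  induction k with
  | zero =>
    intro x y hc hne
    exfalso
    apply hne
    have hxy : x = y := by
      funext u
      by_contra hu
      have hmem : u ∈ Finset.univ.filter fun u => x u ≠ y u := by simp [hu]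
      have := Finset.card_pos.mpr ⟨u, hmem⟩
      omega
    rw [hxy]
  | succ k ih =>
    intro x y hc hne
    have hxy : x ≠ y := fun h => hne (by rw [h])
    have : ∃ u₀, x u₀ ≠ y u₀ := by
      by_contra h
      push_neg at h
      exact hxy (funext h)
    obtain ⟨u₀, hu₀⟩ := this
    set x' := Function.update x u₀ (y u₀) with hx'
    by_cases hfx : f x v = f x' v
    · have hsub : (Finset.univ.filter fun u => x' u ≠ y u) ⊂
          (Finset.univ.filter fun u => x u ≠ y u) := by
        constructor
        · intro u hu
          simp only [Finset.mem_filter, Finset.mem_univ, true_and] at hu ⊢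
          by_cases huu : u = u₀
          · subst huu; simp [hx', Function.update_self] at hu
          · rwa [hx', Function.update_of_ne huu] at hu
        · intro hsub'
          have := hsub' (by simp [hu₀] : u₀ ∈ _)
          simp [hx', Function.update_self] at this
      have hcard : (Finset.univ.filter fun u => x' u ≠ y u).card ≤ k := by
        have := Finset.card_lt_card hsub
        omega
      obtain ⟨u, hu, hdep⟩ := ih x' y hcard (by rw [← hfx]; exact hne)
      have huu : u ≠ u₀ := by
        intro h; subst h
        simp [hx', Function.update_self] at hu
      refine ⟨u, ?_, hdep⟩
      rwa [hx', Function.update_of_ne huu] at hu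
    · exact ⟨u₀, hu₀, x, x', fun w hw => (Function.update_of_ne hw _ _).symm, hfx⟩

/-- for a Boolean network `f` and a feedback vertex set `I` of its
interaction graph, fixed points are determined by their restriction to `I`;
in particular there are at most `2^|I|` fixed points. -/
theorem stmt0 {n : ℕ} (f : (Fin n → Bool) → Fin n → Bool)
    (G : Fin n → Fin n → Prop) (hG : ∀ u v, G u v ↔ Depends f u v)
    (I : Finset (Fin n)) (hI : IsFVS G I) :
    (∀ x y : Fin n → Bool, f x = x → f y = y →
        (x = y ↔ ∀ v ∈ I, x v = y v)) ∧
    Set.ncard {x : Fin n → Bool | f x = x} ≤ 2 ^ I.card := by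
  have main : ∀ x y : Fin n → Bool, f x = x → f y = y →
      (x = y ↔ ∀ v ∈ I, x v = y v) := by
    intro x y hx hy
    constructor
    · intro h v _; rw [h]
    · intro hagree
      by_contra hne
      -- the set of disagreement vertices, as a subtype
      have hT : ∃ v, x v ≠ y v := by
        by_contra h
        push_neg at h
        exact hne (funext h)
      obtain ⟨v₀, hv₀⟩ := hT
      let T := {v : Fin n // x v ≠ y v}
      have step : ∀ t : T, ∃ u : T, G u.val t.val := by
        rintro ⟨v, hv⟩
        have hfv : f x v ≠ f y v := by rw [hx, hy]; exact hv
        obtain ⟨u, hu, hdep⟩ := exists_depends f v _ x y le_rfl hfv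
        exact ⟨⟨u, hu⟩, (hG u v).mpr hdep⟩
      choose stepf hstep using step
      let g : ℕ → T := fun k => stepf^[k] ⟨v₀, hv₀⟩
      have hg : ∀ k, G (g (k+1)).val (g k).val := by
        intro k
        have : g (k+1) = stepf (g k) := Function.iterate_succ_apply' stepf k _
        rw [this]
        exact hstep (g k)
      obtain ⟨i₁, j₁, hij, hgij⟩ := Finite.exists_ne_map_eq_of_infinite g
      have hP : ∃ d, 0 < d ∧ ∃ i, g i = g (i + d) := by
        rcases Nat.lt_or_ge i₁ j₁ with h | h
        · exact ⟨j₁ - i₁, by omega, i₁, by rw [hgij]; congr 1; omega⟩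
        · have : j₁ < i₁ := by omega
          exact ⟨i₁ - j₁, by omega, j₁, by rw [← hgij]; congr 1; omega⟩
      let d := Nat.find hP
      obtain ⟨hd, i, hgi⟩ : 0 < d ∧ ∃ i, g i = g (i + d) := Nat.find_spec hP
      have hmin : ∀ d' < d, ¬(0 < d' ∧ ∃ i, g i = g (i + d')) := fun d' h =>
        Nat.find_min hP h
      let h : ℕ → Fin n := fun t => (g (i + d - t)).val
      have hinj : ∀ a < d, ∀ b < d, h a = h b → a = b := by
        intro a ha b hb hab
        by_contra hne'
        wlog hab' : a < b generalizing a b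
        · exact this b hb a ha hab.symm (Ne.symm hne') (by omega)
        have hgeq : g (i + d - b) = g (i + d - a) := by
          apply Subtype.ext
          exact hab.symm
        have : g (i + d - b) = g ((i + d - b) + (b - a)) := by
          rw [hgeq]; congr 1; omega
        exact hmin (b - a) (by omega) ⟨by omega, _, this⟩
      have harc : ∀ t, t + 1 < d → G (h t) (h (t + 1)) := by
        intro t ht
        have h1 : i + d - t = (i + d - t - 1) + 1 := by omega
        have h2 : i + d - (t + 1) = i + d - t - 1 := by omega
        show G (g (i + d - t)).val (g (i + d - (t+1))).val
        rw [h1, h2]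
        exact hg _
      have hwrap : G (h (d - 1)) (h 0) := by
        show G (g (i + d - (d-1))).val (g (i + d - 0)).val
        have h1 : i + d - (d - 1) = i + 1 := by omega
        have h2 : i + d - 0 = i + d := by omega
        rw [h1, h2, ← hgi]
        exact hg i
      have hcyc := cycle_of_fun (G := G) h d hd hinj harc hwrap
      obtain ⟨w, hwl, hwI⟩ := hI _ hcyc
      rw [List.mem_map] at hwl
      obtain ⟨t, _, rfl⟩ := hwl
      exact (g (i + d - t)).2 (hagree _ hwI)
  refine ⟨main, ?_⟩
  have hcard : Set.ncard {x : Fin n → Bool | f x = x} =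
      Nat.card {x : Fin n → Bool | f x = x} := (Nat.card_coe_set_eq _).symm
  rw [hcard]
  have hinj : Function.Injective
      (fun (x : {x : Fin n → Bool | f x = x}) (v : I) => x.val v.val) := by
    rintro ⟨x, hx⟩ ⟨y, hy⟩ hxy
    apply Subtype.ext
    apply (main x y hx hy).mpr
    intro v hv
    exact congrFun hxy ⟨v, hv⟩
  calc Nat.card {x : Fin n → Bool | f x = x} ≤ Nat.card (I → Bool) :=
        Nat.card_le_card_of_injective _ hinj
    _ = 2 ^ I.card := by
        rw [Nat.card_eq_fintype_card]
        simp [Fintype.card_fun]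
end

section
/- If the set of fixed points of a Boolean network f : {0,1}^n → {0,1}^n contains a chain of ℓ+1 elements (for the componentwise order), then the signed interaction graph of f contains ℓ pairwise vertex-disjoint non-negative cycles. -/
open Classical

section ProofAux

/-- Characterization of membership in `CycArcs`. -/
lemma cycArcs_mem {V : Type*} {l : List V} {p : V × V} (hp : p ∈ CycArcs l) :
    ∃ t : ℕ, ∃ ht : t < l.length, ∃ ht' : (t + 1) % l.length < l.length,
      p.1 = l[t] ∧ p.2 = l[(t + 1) % l.length] := by
  have hl : l ≠ [] := by rintro rfl; simp [CycArcs] at hp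
  have hlpos : 0 < l.length := List.length_pos_iff.2 hl
  have htk : (l.take 1).length = 1 := by rw [List.length_take]; omega
  unfold CycArcs at hp
  obtain ⟨t, ht, hpt⟩ := List.mem_iff_getElem.1 hp
  have hzlen : ((l ++ l.take 1).zip (l ++ l.take 1).tail).length = l.length := by
    simp [List.length_zip, htk]
  have ht2 : t < l.length := by rw [hzlen] at ht; exact ht
  rw [List.getElem_zip] at hpt
  have hmod : (t + 1) % l.length < l.length := Nat.mod_lt _ hlpos
  have hp1 : p.1 = (l ++ l.take 1)[t]'(by rw [List.length_append, htk]; omega) := by rw [← hpt]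
  have hp2 : p.2 = (l ++ l.take 1).tail[t]'(by simp [htk]; omega) := by rw [← hpt]
  refine ⟨t, ht2, hmod, ?_, ?_⟩
  · rw [hp1, List.getElem_append_left ht2]
  · rw [hp2, List.getElem_tail]
    by_cases hc : t + 1 < l.length
    · simp only [Nat.mod_eq_of_lt hc]
      rw [List.getElem_append_left hc]
    · have h1 : t + 1 = l.length := by omega
      rw [List.getElem_append_right (by omega)]
      have h0 : t + 1 - l.length = 0 := by omega
      have hm0 : (t + 1) % l.length = 0 := by rw [h1]; exact Nat.mod_self _
      simp only [h0, hm0, List.getElem_take]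

/-- From a `Q`-preserving predecessor function, build a cycle all of whose arcs are
of the form `(g v, v)`. -/
lemma cycle_of_pred {V : Type*} [Fintype V] (g : V → V) (Q : V → Prop)
    (v₀ : V) (h0 : Q v₀) (hg : ∀ v, Q v → Q (g v)) :
    ∃ l : List V, l ≠ [] ∧ l.Nodup ∧ (∀ v ∈ l, Q v) ∧
      ∀ p ∈ CycArcs l, p.2 ∈ l ∧ p.1 = g p.2 := by
  classical
  set s : ℕ → V := fun k => g^[k] v₀ with hs
  have hsQ : ∀ k, Q (s k) := by
    intro k
    induction k with
    | zero => simpa [hs] using h0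
    | succ k ih => simpa [hs, Function.iterate_succ_apply'] using hg _ ih
  have hsucc : ∀ k, s (k + 1) = g (s k) := fun k => Function.iterate_succ_apply' g k v₀
  have hrep : ∃ j, ∃ i, i < j ∧ s i = s j := by
    obtain ⟨x, y, hxy, hf⟩ := Fintype.exists_ne_map_eq_of_card_lt
      (fun k : Fin (Fintype.card V + 1) => s k) (by simp)
    have hxy' : (x : ℕ) ≠ y := fun h => hxy (Fin.ext h)
    rcases lt_or_gt_of_ne hxy' with h | h
    · exact ⟨y, x, h, hf⟩
    · exact ⟨x, y, h, hf.symm⟩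
  set j₀ := Nat.find hrep with hj₀
  obtain ⟨i₀, hij, heq⟩ : ∃ i, i < j₀ ∧ s i = s j₀ := Nat.find_spec hrep
  have hmin : ∀ j < j₀, ¬ ∃ i, i < j ∧ s i = s j := fun j hj => Nat.find_min hrep hj
  set m := j₀ - i₀ with hm
  have hm0 : 0 < m := by omega
  set L := (List.range m).map (fun t => s (j₀ - 1 - t)) with hL
  have hlen : L.length = m := by simp [hL]
  have hgetL : ∀ (k : ℕ) (hk : k < L.length), L[k] = s (j₀ - 1 - k) := by
    intro k hk
    simp [hL]
  refine ⟨L, ?_, ?_, ?_, ?_⟩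
  · intro h
    have := congrArg List.length h
    rw [hlen] at this
    simp at this
    omega
  · refine List.Nodup.map_on ?_ (List.nodup_range (n := m))
    intro t1 ht1 t2 ht2 hst
    simp only [List.mem_range] at ht1 ht2
    by_contra hne
    rcases Nat.lt_or_ge t1 t2 with h | h
    · exact hmin (j₀ - 1 - t1) (by omega) ⟨j₀ - 1 - t2, by omega, hst.symm⟩
    · have h' : t2 < t1 := by omega
      exact hmin (j₀ - 1 - t2) (by omega) ⟨j₀ - 1 - t1, by omega, hst⟩
  · intro v hv
    obtain ⟨t, _, rfl⟩ := List.mem_map.1 hv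
    exact hsQ _
  · intro p hp
    obtain ⟨t, ht, ht', h1, h2⟩ := cycArcs_mem hp
    rw [hlen] at ht
    constructor
    · rw [h2]; exact List.getElem_mem _
    · rw [h1, h2, hgetL t (by omega), hgetL _ ht']
      by_cases hc : t + 1 < m
      · have hmm : (t + 1) % L.length = t + 1 := by rw [hlen]; exact Nat.mod_eq_of_lt hc
        rw [hmm, ← hsucc]
        congr 1
        omega
      · have he : t + 1 = m := by omega
        have hmm : (t + 1) % L.length = 0 := by rw [hlen, he]; exact Nat.mod_self m
        rw [hmm]
        have he2 : j₀ - 1 - 0 = j₀ - 1 := by omega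
        have he3 : j₀ - 1 - t = i₀ := by omega
        rw [he2, he3, heq, ← hsucc]
        congr 1
        omega

/-- The main local lemma: between two comparable fixed points, every differing
coordinate has a differing in-neighbor through a non-negative arc. -/
lemma exists_pred {n : ℕ} (f : (Fin n → Bool) → Fin n → Bool)
    (a b : Fin n → Bool) (hab : a ≤ b)
    (hfa : f a = a) (hfb : f b = b)
    (v : Fin n) (hv : a v ≠ b v) :
    ∃ u, a u ≠ b u ∧ Depends f u v ∧ ¬ NegArc f u v := by
  classical
  by_contra hcon
  push_neg at hcon
  have main : ∀ m (y : Fin n → Bool), a ≤ y → y ≤ b →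
      (Finset.univ.filter fun w => y w ≠ a w).card ≤ m → f y v ≤ f a v := by
    intro m
    induction m with
    | zero =>
      intro y h1 h2 h3
      have hy : y = a := by
        funext w
        by_contra hw
        have hwmem : w ∈ Finset.univ.filter (fun w => y w ≠ a w) := by
          simp [hw]
        have := Finset.card_pos.2 ⟨w, hwmem⟩
        omega
      rw [hy]
    | succ m ih =>
      intro y h1 h2 h3
      by_cases hy : y = a
      · rw [hy]
      · obtain ⟨u, hu⟩ : ∃ u, y u ≠ a u := by
          by_contra h'
          push_neg at h'
          exact hy (funext h')
        have h1u : a u ≤ y u := h1 u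
        have h2u : y u ≤ b u := h2 u
        have hau : a u = false := by
          cases hau' : a u <;> cases hyu' : y u <;> simp_all [Bool.le_iff_imp]
        have hyu : y u = true := by
          cases hyu' : y u <;> simp_all [Bool.le_iff_imp]
        have hbu : b u = true := by
          cases hbu' : b u <;> simp_all [Bool.le_iff_imp]
        have huD : a u ≠ b u := by rw [hau, hbu]; simp
        set y' := Function.update y u false with hy'
        have ha1 : a ≤ y' := by
          intro w
          by_cases hw : w = u
          · subst hw
            simp [hy', Function.update_self, hau]
          · rw [hy', Function.update_of_ne hw]
            exact h1 w
        have hb1 : y' ≤ b := by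
          intro w
          by_cases hw : w = u
          · subst hw
            simp [hy', Function.update_self]
          · rw [hy', Function.update_of_ne hw]
            exact h2 w
        have hcard : (Finset.univ.filter fun w => y' w ≠ a w).card ≤ m := by
          have hsub : (Finset.univ.filter fun w => y' w ≠ a w) ⊆
              (Finset.univ.filter fun w => y w ≠ a w).erase u := by
            intro w hw
            simp only [Finset.mem_filter, Finset.mem_univ, true_and] at hw
            have hwu : w ≠ u := by
              rintro rfl
              apply hw
              simp [hy', Function.update_self, hau]
            rw [Finset.mem_erase]
            refine ⟨hwu, ?_⟩
            simp only [Finset.mem_filter, Finset.mem_univ, true_and]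
            rwa [hy', Function.update_of_ne hwu] at hw
          have humem : u ∈ Finset.univ.filter fun w => y w ≠ a w := by simp [hu]
          have hle := Finset.card_le_card hsub
          rw [Finset.card_erase_of_mem humem] at hle
          have hpos := Finset.card_pos.2 ⟨u, humem⟩
          omega
        have step : f y v ≤ f y' v := by
          by_cases hdep : Depends f u v
          · have hneg := hcon u huD hdep
            have h0 : y' u = false := Function.update_self u false y
            have hle := hneg y' h0
            have hupd : Function.update y' u true = y := by
              funext w
              by_cases hw : w = u
              · subst hw
                simp [Function.update_self, hyu]
              · rw [Function.update_of_ne hw, hy', Function.update_of_ne hw]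
            rwa [hupd] at hle
          · have heq : f y v = f y' v := by
              by_contra hne'
              exact hdep ⟨y, y', fun w hw => (Function.update_of_ne hw _ _).symm, hne'⟩
            exact heq.le
        exact step.trans (ih y' ha1 hb1 hcard)
  have hD := main (Finset.univ.filter fun w => b w ≠ a w).card b hab le_rfl le_rfl
  have hfb' : f b v = b v := congrFun hfb v
  have hfa' : f a v = a v := congrFun hfa v
  rw [hfa', hfb'] at hD
  exact hv (le_antisymm (hab v) hD)

/-- Key lemma: two comparable distinct fixed points give a non-negative cycle
within their set of differing coordinates. -/
lemma key_cycle {n : ℕ} (f : (Fin n → Bool) → Fin n → Bool)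
    (G : Fin n → Fin n → Prop) (hG : ∀ u v, G u v ↔ Depends f u v)
    (a b : Fin n → Bool) (hab : a ≤ b) (hne : a ≠ b)
    (hfa : f a = a) (hfb : f b = b) :
    ∃ l : List (Fin n), IsCycle G l ∧ (∀ v ∈ l, a v ≠ b v) ∧
      0 ≤ CycleSign (arcSign f) l := by
  classical
  have hpred : ∀ v, a v ≠ b v → ∃ u, a u ≠ b u ∧ Depends f u v ∧ ¬ NegArc f u v :=
    fun v hv => exists_pred f a b hab hfa hfb v hv
  set g : Fin n → Fin n := fun v => if h : a v ≠ b v then (hpred v h).choose else v with hg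
  have hgQ : ∀ v, a v ≠ b v → a (g v) ≠ b (g v) := by
    intro v hv
    simp only [hg, dif_pos hv]
    exact (hpred v hv).choose_spec.1
  have hgD : ∀ v, a v ≠ b v → Depends f (g v) v := by
    intro v hv
    simp only [hg, dif_pos hv]
    exact (hpred v hv).choose_spec.2.1
  have hgN : ∀ v, a v ≠ b v → ¬ NegArc f (g v) v := by
    intro v hv
    simp only [hg, dif_pos hv]
    exact (hpred v hv).choose_spec.2.2
  obtain ⟨v₀, hv₀⟩ : ∃ v, a v ≠ b v := by
    by_contra h
    push_neg at h
    exact hne (funext h)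
  obtain ⟨l, hne', hnd, hmem, harcs⟩ := cycle_of_pred g (fun v => a v ≠ b v) v₀ hv₀ hgQ
  refine ⟨l, ⟨hne', hnd, ?_⟩, hmem, ?_⟩
  · intro p hp
    obtain ⟨h2, h1⟩ := harcs p hp
    rw [h1, hG]
    exact hgD _ (hmem _ h2)
  · unfold CycleSign
    apply List.prod_nonneg
    intro x hx
    obtain ⟨p, hp, rfl⟩ := List.mem_map.1 hx
    obtain ⟨h2, h1⟩ := harcs p hp
    rw [h1]
    unfold arcSign
    split
    · norm_num
    · rw [if_neg (hgN _ (hmem _ h2))]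

end ProofAux

/-- if the fixed points of a Boolean network `f` contain a chain of
`ℓ+1` elements, then the signed interaction graph of `f` contains `ℓ` pairwise
vertex-disjoint non-negative cycles. -/
theorem stmt2 {n ℓ : ℕ} (f : (Fin n → Bool) → Fin n → Bool)
    (G : Fin n → Fin n → Prop) (hG : ∀ u v, G u v ↔ Depends f u v)
    (c : Fin (ℓ + 1) → Fin n → Bool)
    (hfix : ∀ i, f (c i) = c i) (hchain : StrictMono c) :
    ∃ P : List (List (Fin n)), IsPacking G P ∧ P.length = ℓ ∧
      ∀ C ∈ P, 0 ≤ CycleSign (arcSign f) C := by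
  classical
  have hmono := hchain.monotone
  have key' : ∀ i : Fin ℓ, ∃ l : List (Fin n), IsCycle G l ∧
      (∀ v ∈ l, c i.castSucc v ≠ c i.succ v) ∧ 0 ≤ CycleSign (arcSign f) l := by
    intro i
    have hlt : c i.castSucc < c i.succ := hchain (Fin.castSucc_lt_succ (i := i))
    exact key_cycle f G hG _ _ hlt.le (ne_of_lt hlt) (hfix _) (hfix _)
  choose C hC1 hC2 hC3 using key'
  refine ⟨(List.finRange ℓ).map C, ⟨?_, ?_⟩, ?_, ?_⟩
  · intro l hl
    obtain ⟨i, _, rfl⟩ := List.mem_map.1 hl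
    exact hC1 i
  · rw [List.pairwise_map]
    refine (List.pairwise_lt_finRange ℓ).imp ?_
    intro i j hij v hvi hvj
    have h1 := hC2 i v hvi
    have h2 := hC2 j v hvj
    have hle : i.succ ≤ j.castSucc := by
      simp only [Fin.le_def, Fin.lt_def, Fin.coe_castSucc, Fin.val_succ] at hij ⊢
      omega
    have e1 : c i.castSucc v ≤ c i.succ v := hmono (Fin.castSucc_lt_succ (i := i)).le v
    have e2 : c i.succ v ≤ c j.castSucc v := hmono hle v
    have e3 : c j.castSucc v ≤ c j.succ v := hmono (Fin.castSucc_lt_succ (i := j)).le v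
    cases hb1 : c i.castSucc v <;> cases hb2 : c i.succ v <;>
      cases hb3 : c j.castSucc v <;> cases hb4 : c j.succ v <;>
      simp_all [Bool.le_iff_imp]
  · simp
  · intro Cl hCl
    obtain ⟨i, _, rfl⟩ := List.mem_map.1 hCl
    exact hC3 i
end

section
/- Let f : {0,1}^n → {0,1}^n be a monotone Boolean network with interaction graph G, let τ be the minimum size of a feedback vertex set of G and ν the maximum number of pairwise vertex-disjoint cycles of G. Then the number of fixed points of f is at most 2 plus the sum of the ν−1 largest binomial coefficients C(τ,k), i.e. at most 2 + Σ_{k=⌊(τ−ν+2)/2⌋}^{⌊(τ+ν−2)/2⌋} C(τ,k). -/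
open Classical

section Graph

variable {V : Type*}

lemma pathArcs_forall {G : V → V → Prop} : ∀ (l : List V),
    (∀ a ∈ PathArcs l, G a.1 a.2) ↔ l.Chain' G
  | [] => by simp [PathArcs, List.Chain']
  | [x] => by simp [PathArcs, List.Chain']
  | x :: y :: t => by
      have h : PathArcs (x :: y :: t) = (x, y) :: PathArcs (y :: t) := rfl
      rw [h, List.forall_mem_cons, List.Chain', List.isChain_cons_cons, ← List.Chain', pathArcs_forall (y :: t)]

lemma isCycle_iff {G : V → V → Prop} (l : List V) :
    IsCycle G l ↔ l ≠ [] ∧ l.Nodup ∧ (l ++ l.take 1).Chain' G := by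
  rw [IsCycle, ← pathArcs_forall (l ++ l.take 1)]
  rfl

lemma exists_cycle {n : ℕ} {G : Fin n → Fin n → Prop} (D : Finset (Fin n))
    (hD : ∀ v ∈ D, ∃ u ∈ D, G u v) (hne : D.Nonempty) :
    ∃ l, IsCycle G l ∧ ∀ v ∈ l, v ∈ D := by
  classical
  obtain ⟨v₀, hv₀⟩ := hne
  have hstep : ∀ v : Fin n, ∃ u, v ∈ D → u ∈ D ∧ G u v := by
    intro v
    by_cases h : v ∈ D
    · obtain ⟨u, hu, hGu⟩ := hD v h
      exact ⟨u, fun _ => ⟨hu, hGu⟩⟩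
    · exact ⟨v₀, fun h' => absurd h' h⟩
  choose g hg using hstep
  set u : ℕ → Fin n := fun m => g^[m] v₀ with hu
  have huD : ∀ m, u m ∈ D := by
    intro m
    induction m with
    | zero => exact hv₀
    | succ m ih =>
        rw [hu]
        simp only [Function.iterate_succ_apply']
        exact (hg (u m) ih).1
  have harc : ∀ m, G (u (m + 1)) (u m) := by
    intro m
    have : u (m + 1) = g (u m) := by
      rw [hu]; simp [Function.iterate_succ_apply']
    rw [this]
    exact (hg (u m) (huD m)).2
  have hrep : ∃ m, ∃ i < m, u i = u m := by
    obtain ⟨a, b, hab, heq⟩ := Finite.exists_ne_map_eq_of_infinite u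
    rcases lt_or_gt_of_ne hab with h | h
    · exact ⟨b, a, h, heq⟩
    · exact ⟨a, b, h, heq.symm⟩
  set j := Nat.find hrep with hj
  obtain ⟨i, hij, huij⟩ := Nat.find_spec hrep
  have hinj : ∀ a b, a < b → b < j → u a ≠ u b := by
    intro a b hab hbj heq
    exact Nat.find_min hrep hbj ⟨a, hab, heq⟩
  set m := j - i with hm
  have hm1 : 1 ≤ m := by omega
  set w : ℕ → Fin n := fun t => u (j - 1 - t) with hw
  set l : List (Fin n) := (List.range m).map w with hl
  have hlen : l.length = m := by simp [hl]
  have hlne : l ≠ [] := by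
    intro h
    rw [h] at hlen
    simp at hlen
    omega
  have htake : l.take 1 = [u (j - 1)] := by
    rw [hl, ← List.map_take, List.take_range]
    have h1 : min 1 m = 1 := by omega
    rw [h1]
    show [w 0] = [u (j - 1)]
    have h2 : w 0 = u (j - 1) := rfl
    rw [h2]
  have hchain : l.Chain' G := by
    rw [hl, List.Chain', List.isChain_map]
    rcases Nat.exists_eq_add_of_le hm1 with ⟨m', hm'⟩
    rw [hm', Nat.add_comm, List.isChain_range_succ]
    intro t ht
    have e1 : j - 1 - t = (j - 1 - (t + 1)) + 1 := by omega
    rw [hw]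
    simp only
    rw [e1]
    exact harc _
  have hlast : l.getLast? = some (u i) := by
    rw [hl]
    rcases Nat.exists_eq_add_of_le hm1 with ⟨m', hm'⟩
    rw [List.getLast?_eq_getElem?]
    have hlen' : ((List.range m).map w).length = m := by simp
    rw [hlen']
    rw [List.getElem?_eq_getElem (by simp; omega)]
    simp only [List.getElem_map, List.getElem_range]
    have : w (m - 1) = u i := by rw [hw]; simp only; congr 1; omega
    rw [this]
  refine ⟨l, ?_, ?_⟩
  · rw [isCycle_iff]
    refine ⟨hlne, ?_, ?_⟩
    · rw [hl]
      refine List.Nodup.map_on ?_ List.nodup_range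
      intro a ha b hb heq
      simp only [List.mem_range] at ha hb
      by_contra hne'
      rcases lt_or_gt_of_ne hne' with h | h
      · exact hinj (j - 1 - b) (j - 1 - a) (by omega) (by omega) (by rw [hw] at heq; simpa using heq.symm)
      · exact hinj (j - 1 - a) (j - 1 - b) (by omega) (by omega) (by rw [hw] at heq; simpa using heq)
    · rw [htake, List.Chain', List.isChain_append]
      refine ⟨hchain, List.isChain_singleton _, ?_⟩
      intro a ha b hb
      simp only [List.head?_cons, Option.mem_def, Option.some.injEq] at hb
      rw [hlast, Option.mem_def, Option.some.injEq] at ha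
      subst ha hb
      have : u i = u ((j - 1) + 1) := by rw [huij]; congr 1; omega
      rw [this]
      exact harc _
  · intro v hv
    rw [hl] at hv
    simp only [List.mem_map, List.mem_range] at hv
    obtain ⟨t, _, rfl⟩ := hv
    exact huD _

lemma depends_of_ne {n : ℕ} (f : (Fin n → Bool) → Fin n → Bool) (v : Fin n) :
    ∀ (x y : Fin n → Bool), f x v ≠ f y v → ∃ u, x u ≠ y u ∧ Depends f u v := by
  classical
  suffices H : ∀ (k : ℕ) (x y : Fin n → Bool),
      (Finset.univ.filter (fun u => x u ≠ y u)).card = k → f x v ≠ f y v →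
      ∃ u, x u ≠ y u ∧ Depends f u v by
    intro x y h
    exact H _ x y rfl h
  intro k
  induction k using Nat.strong_induction_on with
  | _ k ih =>
  intro x y hcard h
  rcases Nat.eq_zero_or_pos k with hk | hk
  · exfalso
    apply h
    have : x = y := by
      funext u
      by_contra hu
      have : u ∈ Finset.univ.filter (fun u => x u ≠ y u) := by
        simp [hu]
      rw [Finset.card_eq_zero.mp (hcard.trans hk)] at this
      simp at this
    rw [this]
  · have hne : (Finset.univ.filter (fun u => x u ≠ y u)).Nonempty := by
      rw [← Finset.card_pos, hcard]; exact hk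
    obtain ⟨u₀, hu₀⟩ := hne
    have hu₀' : x u₀ ≠ y u₀ := by simpa using hu₀
    set x' := Function.update x u₀ (y u₀) with hx'
    by_cases hc : f x' v = f y v
    · refine ⟨u₀, hu₀', x, x', ?_, by rw [hc]; exact h⟩
      intro w hw
      rw [hx', Function.update_of_ne hw]
    · have hdiff : Finset.univ.filter (fun u => x' u ≠ y u)
          = (Finset.univ.filter (fun u => x u ≠ y u)).erase u₀ := by
        ext u
        simp only [Finset.mem_filter, Finset.mem_erase, Finset.mem_univ, true_and]
        by_cases hu : u = u₀
        · subst hu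
          simp [hx', Function.update_self]
        · simp [hx', Function.update_of_ne hu, hu]
      have hcard' : (Finset.univ.filter (fun u => x' u ≠ y u)).card = k - 1 := by
        rw [hdiff, Finset.card_erase_of_mem hu₀, hcard]
      obtain ⟨u, hu1, hu2⟩ := ih (k - 1) (by omega) x' y hcard' hc
      refine ⟨u, ?_, hu2⟩
      have hne' : u ≠ u₀ := by
        intro he
        subst he
        rw [hx', Function.update_self] at hu1
        exact hu1 rfl
      rwa [hx', Function.update_of_ne hne'] at hu1

lemma fvs_le {n : ℕ} {f : (Fin n → Bool) → Fin n → Bool} (hf : Monotone f)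
    {G : Fin n → Fin n → Prop} (hG : ∀ u v, G u v ↔ Depends f u v)
    {I : Finset (Fin n)} (hI : IsFVS G I) {x y : Fin n → Bool}
    (hx : f x = x) (hy : f y = y) (hxy : ∀ v ∈ I, x v ≤ y v) : x ≤ y := by
  classical
  set D := Finset.univ.filter (fun v => x v = true ∧ y v = false) with hD
  rcases Finset.eq_empty_or_nonempty D with he | hne
  · intro v
    have : v ∉ D := by rw [he]; simp
    simp only [hD, Finset.mem_filter, Finset.mem_univ, true_and, not_and] at this
    cases hxv : x v
    · simp
    · cases hyv : y v
      · exact absurd hyv (this hxv)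
      · simp
  · exfalso
    have hstep : ∀ v ∈ D, ∃ u ∈ D, G u v := by
      intro v hv
      simp only [hD, Finset.mem_filter, Finset.mem_univ, true_and] at hv
      set z : Fin n → Bool := fun w => if w ∈ D then false else x w with hz
      have hzy : z ≤ y := by
        intro w
        rw [hz]
        by_cases hw : w ∈ D
        · simp [hw]
        · simp only [hw, if_false]
          simp only [hD, Finset.mem_filter, Finset.mem_univ, true_and, not_and] at hw
          cases hxw : x w
          · simp
          · cases hyw : y w
            · exact absurd hyw (hw hxw)
            · simp
      have hfz : f z v = false := by
        have hle : f z v ≤ false := by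
          have := hf hzy v
          rwa [hy, hv.2] at this
        exact le_antisymm hle (Bool.false_le _)
      have hfx : f x v = true := by rw [hx]; exact hv.1
      obtain ⟨u, hu1, hu2⟩ := depends_of_ne f v z x (by rw [hfz, hfx]; simp)
      have huD : u ∈ D := by
        by_contra huD
        apply hu1
        rw [hz]
        simp [huD]
      refine ⟨u, huD, (hG u v).mpr ?_⟩
      obtain ⟨p, q, hpq1, hpq2⟩ := hu2
      exact ⟨p, q, hpq1, hpq2⟩
    obtain ⟨l, hl, hlD⟩ := exists_cycle D hstep hne
    obtain ⟨v, hv1, hv2⟩ := hI l hl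
    have hvD := hlD v hv1
    simp only [hD, Finset.mem_filter, Finset.mem_univ, true_and] at hvD
    have := hxy v hv2
    rw [hvD.1, hvD.2] at this
    exact absurd this (by decide)

lemma packing_of_chain {n : ℕ} {f : (Fin n → Bool) → Fin n → Bool}
    {G : Fin n → Fin n → Prop} (hG : ∀ u v, G u v ↔ Depends f u v) :
    ∀ (L : List (Fin n → Bool)), L.Chain' (· < ·) → (∀ x ∈ L, f x = x) →
    ∃ P : List (List (Fin n)), IsPacking G P ∧ P.length = L.length - 1 ∧
      ∀ C ∈ P, ∀ v ∈ C, ∀ h0 ∈ L.head?, h0 v = false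
  | [] => by
      intro _ _
      exact ⟨[], ⟨by simp, by simp⟩, by simp, by simp⟩
  | [x] => by
      intro _ _
      refine ⟨[], ⟨by simp, by simp⟩, by simp, by simp⟩
  | x :: y :: t => by
      classical
      intro hch hfix
      rw [List.Chain', List.isChain_cons_cons] at hch
      obtain ⟨hxy, hch'⟩ := hch
      obtain ⟨P', hP', hlen', hinv'⟩ := packing_of_chain hG (y :: t) hch'
        (fun z hz => hfix z (List.mem_cons_of_mem x hz))
      have hxley : x ≤ y := le_of_lt hxy
      set D := Finset.univ.filter (fun v => x v = false ∧ y v = true) with hD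
      have hne : D.Nonempty := by
        obtain ⟨v, hv⟩ := Function.ne_iff.mp (ne_of_lt hxy)
        refine ⟨v, ?_⟩
        have := hxley v
        simp only [hD, Finset.mem_filter, Finset.mem_univ, true_and]
        cases hxv : x v <;> cases hyv : y v
        · exact absurd (hxv.trans hyv.symm) hv
        · exact ⟨rfl, rfl⟩
        · rw [hxv, hyv] at this
          exact Bool.noConfusion (le_antisymm this (Bool.false_le true))
        · exact absurd (hxv.trans hyv.symm) hv
      have hstep : ∀ v ∈ D, ∃ u ∈ D, G u v := by
        intro v hv
        simp only [hD, Finset.mem_filter, Finset.mem_univ, true_and] at hv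
        have hfxv : f x v = false := by rw [hfix x (by simp)]; exact hv.1
        have hfyv : f y v = true := by rw [hfix y (by simp)]; exact hv.2
        obtain ⟨u, hu1, hu2⟩ := depends_of_ne f v x y (by rw [hfxv, hfyv]; simp)
        have huD : u ∈ D := by
          simp only [hD, Finset.mem_filter, Finset.mem_univ, true_and]
          have := hxley u
          cases hxu : x u <;> cases hyu : y u
          · exact absurd (hxu.trans hyu.symm) hu1
          · exact ⟨rfl, rfl⟩
          · rw [hxu, hyu] at this
            exact Bool.noConfusion (le_antisymm this (Bool.false_le true))
          · exact absurd (hxu.trans hyu.symm) hu1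
        exact ⟨u, huD, (hG u v).mpr hu2⟩
      obtain ⟨C, hC, hCD⟩ := exists_cycle D hstep hne
      have hCy : ∀ v ∈ C, y v = true := by
        intro v hv
        have := hCD v hv
        simp only [hD, Finset.mem_filter, Finset.mem_univ, true_and] at this
        exact this.2
      have hCx : ∀ v ∈ C, x v = false := by
        intro v hv
        have := hCD v hv
        simp only [hD, Finset.mem_filter, Finset.mem_univ, true_and] at this
        exact this.1
      have hP'y : ∀ C' ∈ P', ∀ v ∈ C', y v = false := by
        intro C' hC' v hv
        exact hinv' C' hC' v hv y rfl
      refine ⟨C :: P', ⟨?_, ?_⟩, ?_, ?_⟩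
      · intro l hl
        rcases List.mem_cons.mp hl with h | h
        · exact h ▸ hC
        · exact hP'.1 l h
      · rw [List.pairwise_cons]
        refine ⟨?_, hP'.2⟩
        intro C' hC' v hv hv'
        have h1 := hCy v hv
        have h2 := hP'y C' hC' v hv'
        rw [h1] at h2
        exact Bool.noConfusion h2
      · have h1 : (x :: y :: t).length = t.length + 2 := by simp
        have h2 : (C :: P').length = P'.length + 1 := by simp
        have h3 : (y :: t).length = t.length + 1 := by simp
        omega
      · intro C₀ hC₀ v hv h0 hh0
        simp only [List.head?_cons, Option.mem_def, Option.some.injEq] at hh0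
        subst hh0
        rcases List.mem_cons.mp hC₀ with h | h
        · exact hCx v (h ▸ hv)
        · have hyv := hP'y C₀ h v hv
          have := hxley v
          rw [hyv] at this
          exact le_antisymm this (Bool.false_le _)

lemma fvs_univ {n : ℕ} {G : Fin n → Fin n → Prop} : IsFVS G (Finset.univ) := by
  intro l hl
  obtain ⟨v, hv⟩ := List.exists_mem_of_ne_nil l hl.1
  exact ⟨v, hv, Finset.mem_univ v⟩

lemma packing_length_le {n : ℕ} {G : Fin n → Fin n → Prop} {P : List (List (Fin n))}
    (hP : IsPacking G P) {I : Finset (Fin n)} (hI : IsFVS G I) : P.length ≤ I.card := by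
  classical
  have hsel : ∀ i : Fin P.length, ∃ v, v ∈ P.get i ∧ v ∈ I := by
    intro i
    obtain ⟨v, hv1, hv2⟩ := hI (P.get i) (hP.1 _ (List.get_mem P i))
    exact ⟨v, hv1, hv2⟩
  choose sel hsel1 hsel2 using hsel
  have hpw := List.pairwise_iff_get.mp hP.2
  have hinj : Function.Injective sel := by
    intro i j hij
    by_contra hne
    rcases lt_or_gt_of_ne hne with h | h
    · exact hpw i j h (sel i) (hsel1 i) (hij ▸ hsel1 j)
    · exact hpw j i h (sel j) (hsel1 j) (hij ▸ hsel1 i)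
  calc P.length = (Finset.univ : Finset (Fin P.length)).card := by simp
    _ ≤ I.card := Finset.card_le_card_of_injOn sel (fun i _ => hsel2 i) hinj.injOn

lemma nu_bddAbove {n : ℕ} {G : Fin n → Fin n → Prop} :
    BddAbove {k | ∃ P : List (List (Fin n)), IsPacking G P ∧ P.length = k} := by
  refine ⟨n, ?_⟩
  rintro k ⟨P, hP, rfl⟩
  have := packing_length_le hP fvs_univ
  simpa using this

lemma nu_ge {n : ℕ} {G : Fin n → Fin n → Prop} {P : List (List (Fin n))}
    (hP : IsPacking G P) : P.length ≤ nu G :=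
  le_csSup nu_bddAbove ⟨P, hP, rfl⟩

lemma tau_spec {n : ℕ} (G : Fin n → Fin n → Prop) :
    ∃ I : Finset (Fin n), IsFVS G I ∧ I.card = tau G := by
  have hne : {k | ∃ I : Finset (Fin n), IsFVS G I ∧ I.card = k}.Nonempty :=
    ⟨(Finset.univ : Finset (Fin n)).card, Finset.univ, fvs_univ, rfl⟩
  exact Nat.sInf_mem hne

lemma nu_le_tau {n : ℕ} (G : Fin n → Fin n → Prop) : nu G ≤ tau G := by
  have hne : {k | ∃ P : List (List (Fin n)), IsPacking G P ∧ P.length = k}.Nonempty :=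
    ⟨0, [], ⟨by simp, by simp⟩, rfl⟩
  obtain ⟨P, hP, hlen⟩ := Nat.sSup_mem hne nu_bddAbove
  obtain ⟨I, hI, hIcard⟩ := tau_spec G
  rw [nu, ← hlen, ← hIcard]
  exact packing_length_le hP hI

lemma exists_lfp {n : ℕ} (f : (Fin n → Bool) → Fin n → Bool) (hf : Monotone f) :
    ∃ a, f a = a ∧ ∀ x, f x = x → a ≤ x := by
  have hmono : ∀ k, f^[k] ⊥ ≤ f^[k + 1] ⊥ := by
    intro k
    induction k with
    | zero => exact bot_le
    | succ k ih =>
        rw [Function.iterate_succ_apply', Function.iterate_succ_apply']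
        exact hf ih
  have hstab : ∃ k, f^[k + 1] ⊥ = f^[k] ⊥ := by
    by_contra hc
    push_neg at hc
    have hsm : StrictMono (fun k => f^[k] ⊥) := by
      apply strictMono_nat_of_lt_succ
      intro k
      exact lt_of_le_of_ne (hmono k) (Ne.symm (hc k))
    obtain ⟨a, b, hab, heq⟩ := Finite.exists_ne_map_eq_of_infinite (fun k => f^[k] ⊥)
    exact hab (hsm.injective heq)
  obtain ⟨k, hk⟩ := hstab
  refine ⟨f^[k] ⊥, by rw [Function.iterate_succ_apply'] at hk; exact hk, ?_⟩
  intro x hx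
  have : ∀ j, f^[j] ⊥ ≤ x := by
    intro j
    induction j with
    | zero => exact bot_le
    | succ j ih =>
        rw [Function.iterate_succ_apply']
        calc f (f^[j] ⊥) ≤ f x := hf ih
          _ = x := hx
  exact this k

lemma exists_gfp {n : ℕ} (f : (Fin n → Bool) → Fin n → Bool) (hf : Monotone f) :
    ∃ b, f b = b ∧ ∀ x, f x = x → x ≤ b := by
  have hmono : ∀ k, f^[k + 1] ⊤ ≤ f^[k] ⊤ := by
    intro k
    induction k with
    | zero => exact le_top
    | succ k ih =>
        have e2 : f^[k + 1] ⊤ = f (f^[k] ⊤) := Function.iterate_succ_apply' f k ⊤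
        rw [e2] at ih
        rw [Function.iterate_succ_apply' f (k + 1) ⊤, e2]
        exact hf ih
  have hstab : ∃ k, f^[k + 1] ⊤ = f^[k] ⊤ := by
    by_contra hc
    push_neg at hc
    have hsm : StrictAnti (fun k => f^[k] ⊤) := by
      apply strictAnti_nat_of_succ_lt
      intro k
      exact lt_of_le_of_ne (hmono k) (hc k)
    obtain ⟨a, b, hab, heq⟩ := Finite.exists_ne_map_eq_of_infinite (fun k => f^[k] ⊤)
    exact hab (hsm.injective heq)
  obtain ⟨k, hk⟩ := hstab
  refine ⟨f^[k] ⊤, by rw [Function.iterate_succ_apply'] at hk; exact hk, ?_⟩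
  intro x hx
  have : ∀ j, x ≤ f^[j] ⊤ := by
    intro j
    induction j with
    | zero => exact le_top
    | succ j ih =>
        rw [Function.iterate_succ_apply']
        calc x = f x := hx.symm
          _ ≤ f (f^[j] ⊤) := hf ih
  exact this k

end Graph

section Comb
open Finset

-- unimodality of binomial coefficients
lemma choose_mono_half {n r s : ℕ} (hrs : r ≤ s) (hs : s ≤ n / 2) :
    n.choose r ≤ n.choose s := by
  induction s, hrs using Nat.le_induction with
  | base => exact le_refl _
  | succ m hm ih =>
      exact (ih (by omega)).trans (Nat.choose_le_succ_of_lt_half_left (by omega))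

lemma choose_uni {n r s : ℕ} (hrs : r ≤ s) (h : r + s ≤ n) :
    n.choose r ≤ n.choose s := by
  rcases le_or_gt s (n / 2) with hs | hs
  · exact choose_mono_half hrs hs
  · rw [← Nat.choose_symm (by omega : s ≤ n)]
    exact choose_mono_half (by omega) (by omega)

variable {α : Type*} [DecidableEq α]

def hgt (F : Finset (Finset α)) (x : Finset α) : ℕ :=
  ((F.filter (· ⊂ x)).attach.sup fun y => hgt F y.1) + 1
termination_by x.card
decreasing_by
  exact Finset.card_lt_card (Finset.mem_filter.mp y.2).2

lemma hgt_lt {F : Finset (Finset α)} {x y : Finset α} (hy : y ∈ F) (hxy : y ⊂ x) :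
    hgt F y < hgt F x := by
  conv_rhs => rw [hgt]
  have h1 : y ∈ F.filter (· ⊂ x) := mem_filter.mpr ⟨hy, hxy⟩
  have := Finset.le_sup (f := fun z : {z // z ∈ F.filter (· ⊂ x)} => hgt F z.1)
    (Finset.mem_attach _ ⟨y, h1⟩)
  exact Nat.lt_succ_of_le this

lemma hgt_chain {F : Finset (Finset α)} {x : Finset α} (hx : x ∈ F) :
    ∃ l : List (Finset α), l.Chain' (· ⊂ ·) ∧ (∀ s ∈ l, s ∈ F) ∧ l.length = hgt F x ∧
      l.getLast? = some x := by
  suffices H : ∀ (n : ℕ) (x : Finset α), x ∈ F → x.card = n → ∃ l : List (Finset α),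
      l.Chain' (· ⊂ ·) ∧ (∀ s ∈ l, s ∈ F) ∧ l.length = hgt F x ∧ l.getLast? = some x from
    H x.card x hx rfl
  intro n
  induction n using Nat.strong_induction_on with
  | _ n ih =>
  intro x hx hn
  subst hn
  rcases Finset.eq_empty_or_nonempty (F.filter (· ⊂ x)) with he | hne
  · refine ⟨[x], List.isChain_singleton x, by simpa using hx, ?_, rfl⟩
    rw [hgt, he]
    simp
  · obtain ⟨y, _, hsup⟩ := Finset.exists_mem_eq_sup (F.filter (· ⊂ x)).attach
      (Finset.attach_nonempty_iff.mpr hne) (fun z => hgt F z.1)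
    obtain ⟨hyF, hyx⟩ := mem_filter.mp y.2
    obtain ⟨l, hl1, hl2, hl3, hl4⟩ := ih y.1.card (Finset.card_lt_card hyx) y.1 hyF rfl
    refine ⟨l ++ [x], ?_, ?_, ?_, ?_⟩
    · rw [List.Chain', List.isChain_append]
      refine ⟨hl1, List.isChain_singleton x, ?_⟩
      intro a ha b hb
      simp only [List.head?_cons, Option.mem_def, Option.some.injEq] at hb
      subst hb
      rw [hl4, Option.mem_def, Option.some.injEq] at ha
      subst ha
      exact hyx
    · intro s hs
      rcases List.mem_append.mp hs with h | h
      · exact hl2 s h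
      · rw [List.mem_singleton] at h
        exact h ▸ hx
    · rw [List.length_append, hl3, List.length_singleton]
      conv_rhs => rw [hgt]
      rw [← hsup]
    · exact List.getLast?_concat

theorem erdos_kSperner {α : Type*} [Fintype α] [DecidableEq α] (F : Finset (Finset α)) (k : ℕ)
    (hk1 : 1 ≤ k) (hkN : k ≤ Fintype.card α)
    (hch : ∀ l : List (Finset α), l.Chain' (· ⊂ ·) → (∀ s ∈ l, s ∈ F) → l.length ≤ k) :
    F.card ≤ ∑ j ∈ Finset.Icc ((Fintype.card α + 1 - k) / 2) ((Fintype.card α + k - 1) / 2),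
      (Fintype.card α).choose j := by
  classical
  set N := Fintype.card α with hN
  set L := (N + 1 - k) / 2 with hL
  set U := (N + k - 1) / 2 with hU
  set W := Finset.Icc L U with hW
  set R := Finset.range (N + 1) with hR
  -- heights bounded by k
  have hhgt : ∀ x ∈ F, 1 ≤ hgt F x ∧ hgt F x ≤ k := by
    intro x hx
    obtain ⟨l, hl1, hl2, hl3, _⟩ := hgt_chain hx
    have := hch l hl1 hl2
    constructor
    · rw [hgt]; omega
    · omega
  -- the antichains
  set A : ℕ → Finset (Finset α) := fun j => F.filter (fun x => hgt F x = j) with hA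
  have hanti : ∀ j, IsAntichain (· ⊆ ·) ((A j : Finset (Finset α)) : Set (Finset α)) := by
    intro j s hs t ht hst hsub
    simp only [hA, Finset.coe_filter, Set.mem_setOf_eq] at hs ht
    have : hgt F s < hgt F t := hgt_lt hs.1 (ssubset_of_ne_of_subset hst hsub)
    omega
  -- LYM for each antichain
  have hlym : ∀ j, ∑ r ∈ R, (#((A j) # r) : ℚ) / N.choose r ≤ 1 := by
    intro j
    have := Finset.sum_card_slice_div_choose_le_one (𝕜 := ℚ) (hanti j)
    rwa [hR, hN]
  -- slices of F decompose
  have hslice : ∀ r, #(F # r) = ∑ j ∈ Finset.Icc 1 k, #((A j) # r) := by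
    intro r
    rw [← Finset.card_biUnion]
    · congr 1
      ext s
      simp only [Finset.mem_biUnion, mem_slice, hA, Finset.mem_filter, Finset.mem_Icc]
      constructor
      · rintro ⟨hs, hc⟩
        exact ⟨hgt F s, (hhgt s hs), ⟨hs, rfl⟩, hc⟩
      · rintro ⟨j, _, ⟨hs, _⟩, hc⟩
        exact ⟨hs, hc⟩
    · intro i _ j _ hij
      rw [Function.onFun, Finset.disjoint_left]
      intro s hs hs'
      simp only [mem_slice, hA, Finset.mem_filter] at hs hs'
      exact hij (hs.1.2 ▸ hs'.1.2 ▸ rfl)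
  -- total LYM budget
  have hbudget : ∑ r ∈ R, (#(F # r) : ℚ) / N.choose r ≤ k := by
    calc ∑ r ∈ R, (#(F # r) : ℚ) / N.choose r
        = ∑ r ∈ R, ∑ j ∈ Finset.Icc 1 k, (#((A j) # r) : ℚ) / N.choose r := by
          refine Finset.sum_congr rfl fun r _ => ?_
          rw [hslice r, Nat.cast_sum, Finset.sum_div]
      _ = ∑ j ∈ Finset.Icc 1 k, ∑ r ∈ R, (#((A j) # r) : ℚ) / N.choose r :=
          Finset.sum_comm
      _ ≤ ∑ j ∈ Finset.Icc 1 k, (1 : ℚ) := Finset.sum_le_sum fun j _ => hlym j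
      _ = k := by simp [Nat.card_Icc]
  -- basic facts about the window
  have hWR : W ⊆ R := by
    intro j hj
    simp only [hW, Finset.mem_Icc] at hj
    simp only [hR, Finset.mem_range]
    omega
  have hWcard : #W = k := by
    simp only [hW, Nat.card_Icc]
    omega
  have hmin : ∀ j ∈ W, N.choose L ≤ N.choose j := by
    intro j hj
    simp only [hW, Finset.mem_Icc] at hj
    exact choose_uni hj.1 (by omega)
  have hout : ∀ r ∈ R \ W, N.choose r ≤ N.choose L := by
    intro r hr
    simp only [Finset.mem_sdiff, hR, Finset.mem_range, hW, Finset.mem_Icc, not_and, not_le] at hr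
    obtain ⟨hrN, hrW⟩ := hr
    rcases lt_or_ge r L with h | h
    · exact choose_uni (le_of_lt h) (by omega)
    · have hrU : U < r := hrW h
      rw [← Nat.choose_symm (by omega : r ≤ N)]
      exact choose_uni (by omega) (by omega)
  -- positivity
  have hpos : ∀ r ∈ R, (0 : ℚ) < N.choose r := by
    intro r hr
    simp only [hR, Finset.mem_range] at hr
    exact_mod_cast Nat.choose_pos (by omega)
  have hglb : ∀ r ∈ R, (#(F # r) : ℚ) ≤ N.choose r := by
    intro r hr
    exact_mod_cast Set.Sized.card_le (Finset.sized_slice (𝒜 := F) (r := r))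
  -- knapsack
  have hknap : ∑ r ∈ R, (#(F # r) : ℚ) ≤ ∑ j ∈ W, (N.choose j : ℚ) := by
    have hsplit : ∑ r ∈ R, (#(F # r) : ℚ) =
        ∑ r ∈ R \ W, (#(F # r) : ℚ) + ∑ j ∈ W, (#(F # j) : ℚ) :=
      (Finset.sum_sdiff hWR).symm
    have hbsplit : ∑ r ∈ R \ W, (#(F # r) : ℚ) / N.choose r ≤
        ∑ j ∈ W, (1 - (#(F # j) : ℚ) / N.choose j) := by
      have : ∑ r ∈ R \ W, (#(F # r) : ℚ) / N.choose r
          + ∑ j ∈ W, (#(F # j) : ℚ) / N.choose j ≤ k := by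
        rw [Finset.sum_sdiff hWR]; exact hbudget
      have hk' : (k : ℚ) = ∑ _j ∈ W, (1 : ℚ) := by
        rw [Finset.sum_const, hWcard]; simp
      rw [Finset.sum_sub_distrib, ← hk']
      linarith
    calc ∑ r ∈ R, (#(F # r) : ℚ)
        = ∑ r ∈ R \ W, (#(F # r) : ℚ) + ∑ j ∈ W, (#(F # j) : ℚ) := hsplit
      _ ≤ (∑ r ∈ R \ W, ((#(F # r) : ℚ) / N.choose r) * (N.choose L : ℚ))
          + ∑ j ∈ W, (#(F # j) : ℚ) := by
          refine add_le_add_left (Finset.sum_le_sum fun r hr => ?_) _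
          have h1 : (0:ℚ) < N.choose r := hpos r (Finset.mem_sdiff.mp hr).1
          have h2 : (N.choose r : ℚ) ≤ N.choose L := by
            exact_mod_cast hout r hr
          rw [div_mul_eq_mul_div, le_div_iff₀ h1]
          have := Nat.cast_nonneg (α := ℚ) #(F # r)
          nlinarith
      _ ≤ (∑ j ∈ W, (1 - (#(F # j) : ℚ) / N.choose j) * (N.choose L : ℚ))
          + ∑ j ∈ W, (#(F # j) : ℚ) := by
          refine add_le_add_left ?_ _
          rw [← Finset.sum_mul, ← Finset.sum_mul]
          have hc : (0:ℚ) ≤ (N.choose L : ℚ) := Nat.cast_nonneg _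
          exact mul_le_mul_of_nonneg_right hbsplit hc
      _ ≤ (∑ j ∈ W, (1 - (#(F # j) : ℚ) / N.choose j) * (N.choose j : ℚ))
          + ∑ j ∈ W, (#(F # j) : ℚ) := by
          refine add_le_add_left (Finset.sum_le_sum fun j hj => ?_) _
          have h1 : (0:ℚ) < N.choose j := hpos j (hWR hj)
          have h2 := hglb j (hWR hj)
          have h4 : (0:ℚ) ≤ 1 - (#(F # j) : ℚ) / N.choose j := by
            rw [sub_nonneg, div_le_one h1]; exact h2
          have h5 : (N.choose L : ℚ) ≤ N.choose j := by exact_mod_cast hmin j hj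
          nlinarith
      _ = ∑ j ∈ W, (N.choose j : ℚ) := by
          rw [← Finset.sum_add_distrib]
          refine Finset.sum_congr rfl fun j hj => ?_
          have h1 : (0:ℚ) < N.choose j := hpos j (hWR hj)
          field_simp
          ring
  -- conclude
  have hcardF : ∑ r ∈ R, #(F # r) = #F := by
    rw [hR, ← Finset.sum_card_slice (𝒜 := F)]
    congr 1
    ext r
    simp [Nat.lt_succ_iff, hN]
  have : (#F : ℚ) ≤ ∑ j ∈ W, (N.choose j : ℚ) := by
    rw [← hcardF]
    push_cast at hknap ⊢
    exact hknap
  rw [← Nat.cast_sum] at this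
  exact_mod_cast this

end Comb


/-- a monotone Boolean network with interaction graph `G` has at most
`2` plus the sum of the `ν−1` largest binomial coefficients `C(τ,k)` fixed points. -/
theorem stmt3 {n : ℕ} (f : (Fin n → Bool) → Fin n → Bool) (hf : Monotone f)
    (G : Fin n → Fin n → Prop) (hG : ∀ u v, G u v ↔ Depends f u v) :
    Set.ncard {x : Fin n → Bool | f x = x} ≤
      2 + ∑ k ∈ Finset.Icc ((tau G - nu G + 2) / 2) ((tau G + nu G - 2) / 2),
        (tau G).choose k := by
  classical
  set Fix : Finset (Fin n → Bool) := Finset.univ.filter (fun x => f x = x) with hFix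
  have hsetF : {x : Fin n → Bool | f x = x} = ↑Fix := by
    ext x; simp [hFix]
  rw [hsetF, Set.ncard_coe_finset]
  rcases Finset.eq_empty_or_nonempty Fix with he | hne
  · rw [he]; simp
  obtain ⟨I, hI, hIcard⟩ := tau_spec G
  obtain ⟨a, ha, hamin⟩ := exists_lfp f hf
  obtain ⟨b, hb, hbmax⟩ := exists_gfp f hf
  have haFix : a ∈ Fix := by simp [hFix, ha]
  have hbFix : b ∈ Fix := by simp [hFix, hb]
  by_cases hab : a = b
  · have hFix1 : Fix = {a} := by
      apply Finset.eq_singleton_iff_unique_mem.mpr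
      refine ⟨haFix, fun x hx => ?_⟩
      have hxf : f x = x := by simpa [hFix] using hx
      exact le_antisymm (hab ▸ hbmax x hxf) (hamin x hxf)
    rw [hFix1, Finset.card_singleton]
    omega
  set ρ : (Fin n → Bool) → Finset ↥I :=
    fun x => Finset.univ.filter (fun v : ↥I => x ↑v = true) with hρ
  have hKey : ∀ x y : Fin n → Bool, f x = x → f y = y → ρ x ⊆ ρ y → x ≤ y := by
    intro x y hx hy hsub
    apply fvs_le hf hG hI hx hy
    intro v hvI
    cases hxv : x v
    · exact Bool.false_le _
    · have h1 : (⟨v, hvI⟩ : ↥I) ∈ ρ x := by simp [hρ, hxv]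
      have h2 := hsub h1
      simp only [hρ, Finset.mem_filter, Finset.mem_univ, true_and] at h2
      rw [h2]
  have hρsub : ∀ x y : Fin n → Bool, x ≤ y → ρ x ⊆ ρ y := by
    intro x y hxy s hs
    simp only [hρ, Finset.mem_filter, Finset.mem_univ, true_and] at hs ⊢
    have := hxy ↑s
    rw [hs] at this
    exact le_antisymm (Bool.le_true _) this
  have hρinjOn : ∀ x y, f x = x → f y = y → ρ x = ρ y → x = y := by
    intro x y hx hy he
    exact le_antisymm (hKey x y hx hy (le_of_eq he)) (hKey y x hy hx (le_of_eq he.symm))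
  set S := (Fix.erase b).erase a with hS
  have hSsub : S ⊆ Fix := (Finset.erase_subset _ _).trans (Finset.erase_subset _ _)
  have hSfix : ∀ x ∈ S, f x = x := by
    intro x hx
    have := hSsub hx
    simpa [hFix] using this
  have haS : a ∈ Fix.erase b := Finset.mem_erase.mpr ⟨hab, haFix⟩
  have hsub2 : ({a, b} : Finset (Fin n → Bool)) ⊆ Fix := by
    intro z hz
    rcases Finset.mem_insert.mp hz with h | h
    · exact h ▸ haFix
    · rw [Finset.mem_singleton] at h
      exact h ▸ hbFix
  have hcard2' : ({a, b} : Finset (Fin n → Bool)).card = 2 := by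
    rw [Finset.card_insert_of_notMem (by simpa using hab), Finset.card_singleton]
  have hFix2 : 2 ≤ Fix.card := hcard2' ▸ Finset.card_le_card hsub2
  have hcard2 : Fix.card = S.card + 2 := by
    rw [hS, Finset.card_erase_of_mem haS, Finset.card_erase_of_mem hbFix]
    omega
  set F : Finset (Finset ↥I) := S.image ρ with hF
  have hFcard : F.card = S.card :=
    Finset.card_image_of_injOn (fun x hx y hy he => hρinjOn x y (hSfix x hx) (hSfix y hy) he)
  have hchainF : ∀ l : List (Finset ↥I), l.Chain' (· ⊂ ·) → (∀ s ∈ l, s ∈ F) →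
      l.length + 1 ≤ nu G := by
    intro l hl hlF
    have hlift : ∀ l' : List (Finset ↥I), (∀ s ∈ l', s ∈ F) →
        ∃ L : List (Fin n → Bool), L.map ρ = l' ∧ ∀ x ∈ L, x ∈ S := by
      intro l'
      induction l' with
      | nil => exact fun _ => ⟨[], rfl, by simp⟩
      | cons s t ih =>
          intro hst
          obtain ⟨L, hL1, hL2⟩ := ih (fun s' hs' => hst s' (List.mem_cons_of_mem _ hs'))
          obtain ⟨x, hxS, hxρ⟩ := Finset.mem_image.mp (hst s (by simp))
          refine ⟨x :: L, by simp [hxρ, hL1], ?_⟩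
          intro z hz
          rcases List.mem_cons.mp hz with h | h
          · exact h ▸ hxS
          · exact hL2 z h
    obtain ⟨L, hL1, hL2⟩ := hlift l hlF
    have hLfix : ∀ x ∈ L, f x = x := fun x hx => hSfix x (hL2 x hx)
    have hLchain : L.Chain' (· < ·) := by
      rw [← hL1, List.Chain', List.isChain_map] at hl
      rw [List.Chain', List.isChain_iff_getElem]
      rw [List.isChain_iff_getElem] at hl
      intro i hi
      have h1 := hl i hi
      have hm1 : L.get ⟨i, by omega⟩ ∈ L := L.get_mem _
      have hm2 : L.get ⟨i + 1, by omega⟩ ∈ L := L.get_mem _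
      have hle : L.get ⟨i, by omega⟩ ≤ L.get ⟨i + 1, by omega⟩ :=
        hKey _ _ (hLfix _ hm1) (hLfix _ hm2) h1.subset
      refine lt_of_le_of_ne hle ?_
      intro he
      exact h1.ne (by rw [he])
    have hM : (a :: (L ++ [b])).Chain' (· < ·) := by
      rw [List.Chain', List.isChain_cons]
      constructor
      · intro z hz
        have hzmem : z ∈ L ++ [b] := List.mem_of_mem_head? hz
        have hzfix : f z = z := by
          rcases List.mem_append.mp hzmem with h | h
          · exact hLfix z h
          · rw [List.mem_singleton] at h
            exact h ▸ hb
        have hza : a ≠ z := by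
          rcases List.mem_append.mp hzmem with h | h
          · have := hL2 z h
            rw [hS] at this
            exact fun he => (Finset.mem_erase.mp this).1 he.symm
          · rw [List.mem_singleton] at h
            exact h ▸ hab
        exact lt_of_le_of_ne (hamin z hzfix) hza
      · rw [List.isChain_append]
        refine ⟨hLchain, List.isChain_singleton _, ?_⟩
        intro z hz b' hb'
        simp only [List.head?_cons, Option.mem_def, Option.some.injEq] at hb'
        subst hb'
        have hzL : z ∈ L := List.mem_of_mem_getLast? hz
        have hzS := hL2 z hzL
        have hzb : z ≠ b := by
          rw [hS] at hzS
          exact (Finset.mem_erase.mp (Finset.mem_of_mem_erase hzS)).1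
        exact lt_of_le_of_ne (hbmax z (hLfix z hzL)) hzb
    have hMfix : ∀ x ∈ a :: (L ++ [b]), f x = x := by
      intro x hx
      rcases List.mem_cons.mp hx with h | h
      · exact h ▸ ha
      · rcases List.mem_append.mp h with h' | h'
        · exact hLfix x h'
        · rw [List.mem_singleton] at h'
          exact h' ▸ hb
    obtain ⟨P, hP, hPlen, _⟩ := packing_of_chain hG (a :: (L ++ [b])) hM hMfix
    have hnuge := nu_ge hP
    have hlen : L.length = l.length := by rw [← hL1]; simp
    have hlen2 : (a :: (L ++ [b])).length = L.length + 2 := by simp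
    omega
  by_cases hnu1 : nu G ≤ 1
  · have hFempty : F = ∅ := by
      by_contra hFne
      obtain ⟨s, hs⟩ := Finset.nonempty_of_ne_empty hFne
      have := hchainF [s] (List.isChain_singleton s) (by simpa using hs)
      simp at this
      omega
    have hS0 : S.card = 0 := by rw [← hFcard, hFempty]; simp
    omega
  · push_neg at hnu1
    have hnutau := nu_le_tau G
    have hcardI : Fintype.card ↥I = tau G := by rw [Fintype.card_coe, hIcard]
    have herdos := erdos_kSperner F (nu G - 1) (by omega) (by rw [hcardI]; omega)
      (fun l hl hlF => by have := hchainF l hl hlF; omega)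
    rw [hcardI] at herdos
    have hIcc : Finset.Icc ((tau G + 1 - (nu G - 1)) / 2) ((tau G + (nu G - 1) - 1) / 2)
        = Finset.Icc ((tau G - nu G + 2) / 2) ((tau G + nu G - 2) / 2) := by
      congr 1 <;> omega
    rw [hIcc] at herdos
    omega
end

section
/- If the two sequences X = (x^1,…,x^k) and Y = (y^1,…,y^k) form a k-pattern of {0,1}^n, then X and Y are antichains in {0,1}^n (with the componentwise order) and k ≤ n. -/
open Classical

/-- the two sequences of a `k`-pattern of `{0,1}^n` are antichains,
and `k ≤ n`. -/
theorem stmt4 {n k : ℕ} (P : Set (Fin n → Bool)) (X Y : Fin k → Fin n → Bool)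
    (h : IsPattern P k X Y) :
    (∀ p q, p ≠ q → ¬ X p ≤ X q) ∧ (∀ p q, p ≠ q → ¬ Y p ≤ Y q) ∧ k ≤ n := by
  obtain ⟨hX, hY, hXP, hYP, hxy⟩ := h
  refine ⟨?_, ?_, ?_⟩
  · intro p q hpq hle
    have h1 : X q ≤ Y p := (hxy q p).mpr (Ne.symm hpq)
    have h2 : X p ≤ Y p := le_trans hle h1
    exact ((hxy p p).mp h2) rfl
  · intro p q hpq hle
    have h1 : X q ≤ Y p := (hxy q p).mpr (Ne.symm hpq)
    have h2 : X q ≤ Y q := le_trans h1 hle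
    exact ((hxy q q).mp h2) rfl
  · -- for each p choose a coordinate where X p is true and Y p is false
    have key : ∀ p : Fin k, ∃ i, X p i = true ∧ Y p i = false := by
      intro p
      have hnle : ¬ X p ≤ Y p := fun hle => ((hxy p p).mp hle) rfl
      rw [Pi.le_def] at hnle
      push_neg at hnle
      obtain ⟨i, hi⟩ := hnle
      rw [Bool.lt_iff] at hi
      exact ⟨i, hi.2, hi.1⟩
    choose f hf1 hf2 using key
    have hinj : Function.Injective f := by
      intro p q hpq
      by_contra hne
      have h1 : X p ≤ Y q := (hxy p q).mpr hne
      have := h1 (f p)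
      rw [hf1 p, hpq, hf2 q] at this
      exact absurd this (by simp)
    simpa using Fintype.card_le_of_injective f hinj
end

section
/- Let f : {0,1}^n → {0,1}^n be a monotone Boolean network with interaction graph G. If the set of fixed points of f has a k-pattern, then G has k pairwise vertex-disjoint cycles. -/
open Classical

section MyAux

/-- If `f · v` takes different values on `x` and `y`, then `f_v` depends on some
coordinate where `x` and `y` differ. -/
lemma my_exists_depends {n : ℕ} (f : (Fin n → Bool) → Fin n → Bool) (v : Fin n) :
    ∀ (s : Finset (Fin n)), ∀ (x y : Fin n → Bool), (∀ u, x u ≠ y u → u ∈ s) →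
      f x v ≠ f y v → ∃ u, x u ≠ y u ∧ Depends f u v := by
  intro s
  induction s using Finset.induction_on with
  | empty =>
    intro x y hsub hne
    have hxy : x = y := funext fun u => by
      by_contra h
      exact Finset.notMem_empty u (hsub u h)
    exact absurd (by rw [hxy]) hne
  | @insert a s ha ih =>
    intro x y hsub hne
    by_cases hxa : x a = y a
    · refine ih x y (fun u hu => ?_) hne
      rcases Finset.mem_insert.mp (hsub u hu) with h | h
      · exact absurd (h ▸ hxa) hu
      · exact h
    · set y' := Function.update y a (x a) with hy'
      by_cases h1 : f x v = f y' v
      · refine ⟨a, hxa, y', y, fun w hw => ?_, fun h => hxa ?_⟩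
        · simp [hy', Function.update_of_ne hw]
        · exact absurd (h1.trans h) hne
      · have hsub' : ∀ u, x u ≠ y' u → u ∈ s := by
          intro u hu
          rcases eq_or_ne u a with rfl | hua
          · exact absurd (by simp [hy']) hu
          · rw [hy', Function.update_of_ne hua] at hu
            rcases Finset.mem_insert.mp (hsub u hu) with h | h
            · exact absurd h hua
            · exact h
        obtain ⟨u, hu, hdep⟩ := ih x y' hsub' h1
        refine ⟨u, ?_, hdep⟩
        rcases eq_or_ne u a with rfl | hua
        · exact absurd (by simp [hy']) hu
        · rwa [hy', Function.update_of_ne hua] at hu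

/-- If every vertex of a nonempty finite set `S` has an in-neighbour in `S`,
then `G` has a cycle whose vertices all lie in `S`. -/
lemma my_exists_cycle {V : Type*} [Fintype V] [DecidableEq V] (G : V → V → Prop)
    (S : Finset V) (hne : S.Nonempty) (h : ∀ v ∈ S, ∃ u ∈ S, G u v) :
    ∃ l : List V, IsCycle G l ∧ ∀ v ∈ l, v ∈ S := by
  classical
  obtain ⟨v0, hv0⟩ := hne
  set g : V → V := fun v => if hv : v ∈ S then (h v hv).choose else v with hg
  have hgS : ∀ v ∈ S, g v ∈ S := fun v hv => by
    simp only [hg, dif_pos hv]; exact (h v hv).choose_spec.1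
  have hgG : ∀ v ∈ S, G (g v) v := fun v hv => by
    simp only [hg, dif_pos hv]; exact (h v hv).choose_spec.2
  set orb : ℕ → V := fun m => g^[m] v0 with horb
  have horbS : ∀ m, orb m ∈ S := by
    intro m; induction m with
    | zero => simpa [horb] using hv0
    | succ m ih => simpa [horb, Function.iterate_succ_apply'] using hgS _ ih
  have horbsucc : ∀ m, orb (m + 1) = g (orb m) := fun m =>
    Function.iterate_succ_apply' g m v0
  have hninj : ∃ b, ∃ a, a < b ∧ orb a = orb b := by
    have hcard : Fintype.card S < Fintype.card (Fin (S.card + 1)) := by simp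
    obtain ⟨a, b, hab, heq⟩ := Fintype.exists_ne_map_eq_of_card_lt
      (fun t : Fin (S.card + 1) => (⟨orb t, horbS t⟩ : S)) hcard
    have heq' : orb a = orb b := congrArg Subtype.val heq
    rcases lt_trichotomy (a : ℕ) (b : ℕ) with hlt | hEq | hgt
    · exact ⟨b, a, hlt, heq'⟩
    · exact absurd (Fin.ext hEq) hab
    · exact ⟨a, b, hgt, heq'.symm⟩
  set j0 := Nat.find hninj with hj0
  obtain ⟨i0, hi0lt, hi0eq⟩ := Nat.find_spec hninj
  rw [← hj0] at hi0lt hi0eq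
  have hdist : ∀ p q, p < q → q < j0 → orb p ≠ orb q := by
    intro p q hpq hq hEq
    exact Nat.find_min hninj hq ⟨p, hpq, hEq⟩
  set N := j0 - i0 with hN
  have hNpos : 0 < N := by omega
  set e : ℕ → V := fun t => orb (j0 - 1 - t) with he
  set E : ℕ → V := fun t => e (t % N) with hE
  set l : List V := (List.range N).map e with hl
  have hlen : l.length = N := by simp [hl]
  have hlne : l ≠ [] := by
    intro hcon
    rw [← List.length_eq_zero_iff] at hcon
    omega
  have htake : l.take 1 = [e 0] := by
    obtain ⟨N', hN'⟩ : ∃ N', N = N' + 1 := ⟨N - 1, by omega⟩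
    rw [hl, hN', List.range_succ_eq_map]
    simp
  have hL1 : l ++ l.take 1 = (List.range (N + 1)).map E := by
    rw [htake, List.range_succ, List.map_append]
    congr 1
    · rw [hl]
      refine List.map_congr_left fun t ht => ?_
      rw [hE]; simp only []
      rw [Nat.mod_eq_of_lt (List.mem_range.mp ht)]
    · simp [hE, Nat.mod_self]
  have hgetE : ∀ i, (hi : i < N + 1) →
      ((List.range (N + 1)).map E)[i]'(by simpa using hi) = E i := by
    intro i hi
    simp
  refine ⟨l, ⟨hlne, ?_, ?_⟩, ?_⟩
  · -- Nodup
    rw [hl]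
    refine List.Nodup.map_on ?_ List.nodup_range
    intro t ht t' ht' hee
    rw [List.mem_range] at ht ht'
    by_contra hne'
    have hp : j0 - 1 - t ≠ j0 - 1 - t' := by omega
    rcases hp.lt_or_gt with hlt | hlt
    · exact hdist _ _ hlt (by omega) hee
    · exact hdist _ _ hlt (by omega) hee.symm
  · -- arcs
    intro a ha
    rw [CycArcs, hL1] at ha
    set L := (List.range (N + 1)).map E with hLdef
    have hLlen : L.length = N + 1 := by simp [hLdef]
    obtain ⟨i, hi, hia⟩ := List.mem_iff_getElem.mp ha
    have hizip : i < N := by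
      simpa [hLlen] using hi
    have htail : L.tail[i]'(by simp [hLlen]; omega) = L[i + 1]'(by omega) := by
      rw [List.getElem_tail]
    have hfst : a.1 = E i := by
      rw [← hia, List.getElem_zip]
      simp [hLdef]
    have hsnd : a.2 = E (i + 1) := by
      rw [← hia, List.getElem_zip]
      simp only [htail]
      simp [hLdef]
    rw [hfst, hsnd]
    have hEi : E i = orb (j0 - 1 - i) := by
      rw [hE]; simp only []
      rw [Nat.mod_eq_of_lt hizip, he]
    rcases eq_or_lt_of_le (Nat.succ_le_of_lt hizip) with hiN | hiN
    · -- i + 1 = N : wrap-around arc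
      have hEi1 : E (i + 1) = orb (j0 - 1) := by
        rw [hE]; simp only []
        rw [show i + 1 = N from hiN, Nat.mod_self, he]
        simp
      have hIdx : j0 - 1 - i = i0 := by omega
      have hEi' : E i = g (orb (j0 - 1)) := by
        have hj : orb j0 = g (orb (j0 - 1)) := by
          conv_lhs => rw [show j0 = (j0 - 1) + 1 by omega]
          rw [horbsucc]
        rw [hEi, hIdx, hi0eq, hj]
      rw [hEi', hEi1]
      exact hgG _ (horbS _)
    · -- i + 1 < N : normal arc
      have hEi1 : E (i + 1) = orb (j0 - 2 - i) := by
        rw [hE]; simp only []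
        rw [Nat.mod_eq_of_lt hiN, he]
        simp only []
        rw [show j0 - 1 - (i + 1) = j0 - 2 - i by omega]
      have hEi' : E i = g (orb (j0 - 2 - i)) := by
        rw [hEi]
        have : j0 - 1 - i = (j0 - 2 - i) + 1 := by omega
        rw [this, horbsucc]
      rw [hEi', hEi1]
      exact hgG _ (horbS _)
  · -- vertices in S
    intro v hv
    rw [hl, List.mem_map] at hv
    obtain ⟨t, _, rfl⟩ := hv
    exact horbS _

end MyAux

/-- if the set of fixed points of a monotone Boolean network with
interaction graph `G` has a `k`-pattern, then `G` has `k` pairwise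
vertex-disjoint cycles. -/
theorem stmt5 {n k : ℕ} (f : (Fin n → Bool) → Fin n → Bool) (hf : Monotone f)
    (G : Fin n → Fin n → Prop) (hG : ∀ u v, G u v ↔ Depends f u v)
    (h : HasPattern {x : Fin n → Bool | f x = x} k) :
    ∃ P : List (List (Fin n)), IsPacking G P ∧ P.length = k := by
  classical
  obtain ⟨X, Y, hXinj, hYinj, hXP, hYP, hpat⟩ := h
  set S : Fin k → Finset (Fin n) :=
    fun p => Finset.univ.filter fun v => X p v = true ∧ Y p v = false with hS
  have hmemS : ∀ p v, v ∈ S p ↔ (X p v = true ∧ Y p v = false) := by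
    intro p v; simp [hS]
  have hSne : ∀ p, (S p).Nonempty := by
    intro p
    have h1 : ¬ X p ≤ Y p := fun hle => (hpat p p).mp hle rfl
    have h2 : ∃ v, ¬ (X p v ≤ Y p v) := by
      by_contra hc
      push_neg at hc
      exact h1 fun v => hc v
    obtain ⟨v, hv⟩ := h2
    have hx : X p v = true := by
      by_contra hcon
      rw [Bool.not_eq_true] at hcon
      rw [hcon] at hv
      exact hv (Bool.false_le _)
    have hy : Y p v = false := by
      by_contra hcon
      rw [Bool.not_eq_false] at hcon
      rw [hcon] at hv
      exact hv (Bool.le_true _)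
    exact ⟨v, (hmemS p v).mpr ⟨hx, hy⟩⟩
  have hSdisj : ∀ p q, p ≠ q → ∀ v, v ∈ S p → v ∉ S q := by
    intro p q hpq v hvp hvq
    obtain ⟨hx, _⟩ := (hmemS p v).mp hvp
    obtain ⟨_, hy⟩ := (hmemS q v).mp hvq
    have hle := (hpat p q).mpr hpq v
    rw [hx, hy] at hle
    exact absurd (le_antisymm hle (Bool.false_le _)) (by simp)
  have hSin : ∀ p, ∀ v ∈ S p, ∃ u ∈ S p, G u v := by
    intro p v hv
    obtain ⟨hx, hy⟩ := (hmemS p v).mp hv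
    have hfx : f (X p) = X p := hXP p
    have hfy : f (Y p) = Y p := hYP p
    set d : Fin n → Bool := fun u => X p u && Y p u with hd
    have hdb : d ≤ Y p := fun u => by
      rw [hd]; exact Bool.and_le_right _ _
    have hfd : f d v = false := by
      have hle : f d v ≤ f (Y p) v := hf hdb v
      rw [hfy, hy] at hle
      exact le_antisymm hle (Bool.false_le _)
    have hfa : f (X p) v = true := by rw [hfx]; exact hx
    have hne : f (X p) v ≠ f d v := by rw [hfa, hfd]; simp
    obtain ⟨u, hu, hdep⟩ :=
      my_exists_depends f v Finset.univ (X p) d (fun u _ => Finset.mem_univ u) hne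
    refine ⟨u, ?_, (hG u v).mpr hdep⟩
    rw [hmemS]
    rw [hd] at hu
    cases hxu : X p u <;> cases hyu : Y p u <;>
      simp [hxu, hyu] at hu ⊢
  choose C hC hCS using fun p => my_exists_cycle G (S p) (hSne p) (hSin p)
  refine ⟨(List.finRange k).map C, ⟨?_, ?_⟩, by simp⟩
  · intro l hl
    obtain ⟨p, _, rfl⟩ := List.mem_map.mp hl
    exact hC p
  · rw [List.pairwise_map]
    refine (List.nodup_finRange k).imp ?_
    intro p q hpq v hvp hvq
    exact hSdisj p q hpq v (hCS p v hvp) (hCS q v hvq)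
end

section
/- Let f : {0,1}^n → {0,1}^n be a monotone Boolean network with interaction graph G, and let I be a feedback vertex set of G. If the set {x_I : x is a fixed point of f} ⊆ {0,1}^I has a special k-pattern, then G has a special packing of size k. -/
open Classical

section ListLemmas
variable {V : Type*} {G : V → V → Prop}

lemma mem_pathArcs_iff {l : List V} {a : V × V} :
    a ∈ PathArcs l ↔ ∃ (i : ℕ) (h : i + 1 < l.length), l[i] = a.1 ∧ l[i + 1] = a.2 := by
  have hlen : (l.zip l.tail).length = l.length - 1 := by
    simp [List.length_zip, List.length_tail]
  constructor
  · intro h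
    rw [PathArcs, List.mem_iff_getElem] at h
    obtain ⟨i, hi, he⟩ := h
    have hi' : i + 1 < l.length := by omega
    refine ⟨i, hi', ?_, ?_⟩
    · have := List.getElem_zip (l := l) (l' := l.tail) (i := i) (h := hi)
      rw [this] at he
      rw [← he]
    · have := List.getElem_zip (l := l) (l' := l.tail) (i := i) (h := hi)
      rw [this] at he
      rw [← he]
      simp [List.getElem_tail]
  · rintro ⟨i, hi, h1, h2⟩
    rw [PathArcs, List.mem_iff_getElem]
    have hi' : i < (l.zip l.tail).length := by omega
    refine ⟨i, hi', ?_⟩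
    rw [List.getElem_zip]
    ext
    · simpa using h1
    · simpa [List.getElem_tail] using h2

lemma pathArcs_mem {l : List V} {a : V × V} (h : a ∈ PathArcs l) : a.1 ∈ l ∧ a.2 ∈ l := by
  rw [mem_pathArcs_iff] at h
  obtain ⟨i, hi, h1, h2⟩ := h
  constructor
  · rw [List.mem_iff_getElem]; exact ⟨i, by omega, h1⟩
  · rw [List.mem_iff_getElem]; exact ⟨i + 1, hi, h2⟩

lemma cycArcs_eq_pathArcs (l : List V) : CycArcs l = PathArcs (l ++ l.take 1) := rfl

lemma length_cyc_aux {l : List V} (hl : l ≠ []) : (l ++ l.take 1).length = l.length + 1 := by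
  have : l.length ≥ 1 := by
    cases l with
    | nil => exact absurd rfl hl
    | cons a t => simp
  simp [List.length_take]
  omega

lemma mem_cycArcs_iff {l : List V} (hl : l ≠ []) {a : V × V} :
    a ∈ CycArcs l ↔ ∃ (i j : ℕ) (hi : i < l.length) (hj : j < l.length),
      j = (i + 1) % l.length ∧ l[i] = a.1 ∧ l[j] = a.2 := by
  have hlen := length_cyc_aux hl
  have hl1 : 1 ≤ l.length := by
    cases l with
    | nil => exact absurd rfl hl
    | cons a t => simp
  rw [cycArcs_eq_pathArcs, mem_pathArcs_iff]
  constructor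
  · rintro ⟨i, hi, h1, h2⟩
    have hilt : i < l.length := by omega
    rcases Nat.lt_or_ge (i + 1) l.length with hc | hc
    · refine ⟨i, i + 1, hilt, hc, (Nat.mod_eq_of_lt hc).symm, ?_, ?_⟩
      · rw [← h1, List.getElem_append_left hilt]
      · rw [← h2, List.getElem_append_left hc]
    · have hieq : i + 1 = l.length := by omega
      refine ⟨i, 0, hilt, by omega, by rw [hieq, Nat.mod_self], ?_, ?_⟩
      · rw [← h1, List.getElem_append_left hilt]
      · rw [← h2, List.getElem_append_right (by omega : l.length ≤ i + 1)]
        rw [List.getElem_take]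
        congr 1
        omega
  · rintro ⟨i, j, hi, hj, hje, h1, h2⟩
    refine ⟨i, by omega, ?_, ?_⟩
    · rw [List.getElem_append_left hi]; exact h1
    · rcases Nat.lt_or_ge (i + 1) l.length with hc | hc
      · have : j = i + 1 := by rw [hje, Nat.mod_eq_of_lt hc]
        subst this
        rw [List.getElem_append_left hc]; exact h2
      · have hieq : i + 1 = l.length := by omega
        have : j = 0 := by rw [hje, hieq, Nat.mod_self]
        subst this
        rw [List.getElem_append_right (by omega : l.length ≤ i + 1)]
        rw [List.getElem_take]
        convert h2 using 2
        omega

lemma cycArcs_mem_s6 {l : List V} {a : V × V} (h : a ∈ CycArcs l) : a.1 ∈ l ∧ a.2 ∈ l := by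
  rcases eq_or_ne l [] with rfl | hl
  · simp [CycArcs] at h
  rw [mem_cycArcs_iff hl] at h
  obtain ⟨i, j, hi, hj, _, h1, h2⟩ := h
  constructor
  · rw [List.mem_iff_getElem]; exact ⟨i, hi, h1⟩
  · rw [List.mem_iff_getElem]; exact ⟨j, hj, h2⟩

lemma cycArcs_pred_unique {l : List V} (hnd : l.Nodup) {u₁ u₂ v : V}
    (h₁ : (u₁, v) ∈ CycArcs l) (h₂ : (u₂, v) ∈ CycArcs l) : u₁ = u₂ := by
  rcases eq_or_ne l [] with rfl | hl
  · simp [CycArcs] at h₁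
  rw [mem_cycArcs_iff hl] at h₁ h₂
  obtain ⟨i₁, j₁, hi₁, hj₁, hje₁, e₁, f₁⟩ := h₁
  obtain ⟨i₂, j₂, hi₂, hj₂, hje₂, e₂, f₂⟩ := h₂
  have hv : l[j₁] = l[j₂] := by
    rw [f₁, f₂]
  rw [hnd.getElem_inj_iff] at hv
  subst hv
  have : i₁ = i₂ := by
    rcases Nat.lt_or_ge (i₁ + 1) l.length with hc₁ | hc₁ <;>
      rcases Nat.lt_or_ge (i₂ + 1) l.length with hc₂ | hc₂
    · rw [hje₂, Nat.mod_eq_of_lt hc₁, Nat.mod_eq_of_lt hc₂] at hje₁; omega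
    · have h2 : i₂ + 1 = l.length := by omega
      rw [hje₂, Nat.mod_eq_of_lt hc₁, h2, Nat.mod_self] at hje₁; omega
    · have hh : i₁ + 1 = l.length := by omega
      rw [hje₂, hh, Nat.mod_self, Nat.mod_eq_of_lt hc₂] at hje₁; omega
    · omega
  subst this
  exact e₁.symm.trans e₂

lemma cycArcs_pred_exists {l : List V} (hl : l ≠ []) {v : V} (hv : v ∈ l) :
    ∃ u ∈ l, (u, v) ∈ CycArcs l := by
  rw [List.mem_iff_getElem] at hv
  obtain ⟨j, hj, hvj⟩ := hv
  rcases Nat.eq_zero_or_pos j with rfl | hjpos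
  · refine ⟨l[l.length - 1]'(by omega), by rw [List.mem_iff_getElem]; exact ⟨_, by omega, rfl⟩, ?_⟩
    rw [mem_cycArcs_iff hl]
    refine ⟨l.length - 1, 0, by omega, by omega, ?_, rfl, hvj⟩
    have : l.length - 1 + 1 = l.length := by omega
    rw [this, Nat.mod_self]
  · refine ⟨l[j - 1]'(by omega), by rw [List.mem_iff_getElem]; exact ⟨_, by omega, rfl⟩, ?_⟩
    rw [mem_cycArcs_iff hl]
    refine ⟨j - 1, j, by omega, hj, ?_, rfl, hvj⟩
    have h1 : j - 1 + 1 = j := by omega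
    rw [h1, Nat.mod_eq_of_lt hj]

lemma exists_cycle_of_inclosed [Finite V] {S : Set V}
    (hne : S.Nonempty) (hstep : ∀ v ∈ S, ∃ u ∈ S, G u v) :
    ∃ l : List V, IsCycle G l ∧ ∀ x ∈ l, x ∈ S := by
  classical
  set g : V → V := fun v => if h : v ∈ S then (hstep v h).choose else v with hg
  have hgS : ∀ v ∈ S, g v ∈ S := by
    intro v hv
    simp only [hg, dif_pos hv]
    exact (hstep v hv).choose_spec.1
  have hgG : ∀ v ∈ S, G (g v) v := by
    intro v hv
    simp only [hg, dif_pos hv]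
    exact (hstep v hv).choose_spec.2
  obtain ⟨v₀, hv₀⟩ := hne
  set u : ℕ → V := fun t => g^[t] v₀ with hu
  have humem : ∀ t, u t ∈ S := by
    intro t
    induction t with
    | zero => exact hv₀
    | succ m ih =>
      have : u (m + 1) = g (u m) := by
        simp only [hu]; rw [Function.iterate_succ_apply']
      rw [this]; exact hgS _ ih
  have harc : ∀ t, G (u (t + 1)) (u t) := by
    intro t
    have : u (t + 1) = g (u t) := by
      simp only [hu]; rw [Function.iterate_succ_apply']
    rw [this]; exact hgG _ (humem t)
  have hQ : ∃ j, ∃ i, i < j ∧ u i = u j := by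
    obtain ⟨i, j, hne', heq⟩ := Finite.exists_ne_map_eq_of_infinite u
    rcases Nat.lt_or_ge i j with h | h
    · exact ⟨j, i, h, heq⟩
    · exact ⟨i, j, by omega, heq.symm⟩
  set jm := Nat.find hQ with hjm
  obtain ⟨i0, hi0, hueq⟩ := Nat.find_spec hQ
  have hmin : ∀ a b, i0 ≤ a → a < b → b < jm → u a ≠ u b := by
    intro a b _ hab hbj heq
    exact Nat.find_min hQ hbj ⟨a, hab, heq⟩
  set len := jm - i0 with hlen
  have hlenpos : 1 ≤ len := by omega
  set l : List V := (List.range len).map (fun t => u (jm - 1 - t)) with hldef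
  have hllen : l.length = len := by simp [hldef]
  have hlget : ∀ (t : ℕ) (h : t < l.length), l[t] = u (jm - 1 - t) := by
    intro t h
    simp only [hldef]
    rw [List.getElem_map]
    congr 1
    · rw [List.getElem_range]
  have hlne : l ≠ [] := by
    intro h
    rw [h] at hllen
    simp at hllen
    omega
  refine ⟨l, ⟨hlne, ?_, ?_⟩, ?_⟩
  · rw [List.nodup_iff_injective_getElem]
    intro ⟨a, ha⟩ ⟨b, hb⟩ heq
    simp only at heq
    rw [hlget a ha, hlget b hb] at heq
    have ha' : a < len := by omega
    have hb' : b < len := by omega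
    have hA : i0 ≤ jm - 1 - a ∧ jm - 1 - a < jm := by omega
    have hB : i0 ≤ jm - 1 - b ∧ jm - 1 - b < jm := by omega
    have : jm - 1 - a = jm - 1 - b := by
      by_contra hne'
      rcases Nat.lt_or_ge (jm - 1 - a) (jm - 1 - b) with h | h
      · exact hmin _ _ hA.1 h hB.2 heq
      · exact hmin _ _ hB.1 (by omega) hA.2 heq.symm
    have : a = b := by omega
    simp [this]
  · intro a ha
    rw [mem_cycArcs_iff hlne] at ha
    obtain ⟨i, j, hi, hj, hje, h1, h2⟩ := ha
    rcases Nat.lt_or_ge (i + 1) l.length with hc | hc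
    · have : j = i + 1 := by rw [hje, Nat.mod_eq_of_lt hc]
      subst this
      rw [hlget i hi] at h1
      rw [hlget (i + 1) hc] at h2
      rw [← h1, ← h2]
      have h3 : jm - 1 - i = (jm - 1 - (i + 1)) + 1 := by
        rw [hllen] at hc; omega
      rw [h3]
      exact harc _
    · have hieq : i + 1 = l.length := by omega
      have : j = 0 := by rw [hje, hieq, Nat.mod_self]
      subst this
      rw [hlget i hi] at h1
      rw [hlget 0 (by omega)] at h2
      rw [← h1, ← h2]
      have h4 : jm - 1 - i = i0 := by rw [hllen] at hieq; omega
      have h5 : jm - 1 - 0 = jm - 1 := by omega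
      rw [h4, h5]
      have h6 : G (u jm) (u (jm - 1)) := by
        have : jm = (jm - 1) + 1 := by omega
        rw [this]
        exact harc _
      rw [← hueq] at h6
      exact h6
  · intro x hx
    rw [List.mem_iff_getElem] at hx
    obtain ⟨t, ht, hxe⟩ := hx
    rw [hlget t ht] at hxe
    rw [← hxe]
    exact humem _

end ListLemmas
section ChainLemmas
variable {V : Type*} {G : V → V → Prop}

lemma not_nodup_split {L : List V} (h : ¬ L.Nodup) :
    ∃ (l₁ : List V) (x : V) (l₂ : List V), L = l₁ ++ x :: l₂ ∧ x ∈ l₂ := by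
  induction L with
  | nil => simp at h
  | cons y t ih =>
    by_cases hy : y ∈ t
    · exact ⟨[], y, t, rfl, hy⟩
    · have : ¬ t.Nodup := by
        intro hnd
        exact h (List.nodup_cons.mpr ⟨hy, hnd⟩)
      obtain ⟨l₁, x, l₂, he, hx⟩ := ih this
      exact ⟨y :: l₁, x, l₂, by rw [he]; rfl, hx⟩

lemma chain_imp_chain' {a : V} {l : List V} (h : List.Chain G a l) : List.Chain' G l := by
  cases l with
  | nil => exact List.IsChain.nil
  | cons b t => exact (List.chain_cons.mp h).2

lemma chain_snoc {a b : V} {l : List V} (h : List.Chain G a l)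
    (hb : G ((a :: l).getLast (by simp)) b) : List.Chain G a (l ++ [b]) := by
  induction l generalizing a with
  | nil => exact List.IsChain.cons_cons hb (.singleton _)
  | cons c t ih =>
    replace h := List.chain_cons.mp h
    rw [List.getLast_cons (by simp : (c :: t) ≠ [])] at hb
    exact List.chain_cons.mpr ⟨h.1, ih h.2 hb⟩

lemma chain_shrink_aux : ∀ (N : ℕ) (L : List V) (a w : V), L.length ≤ N →
    List.Chain G a (L ++ [w]) →
    ∃ L', List.Chain G a (L' ++ [w]) ∧ (∀ x ∈ L', x ∈ L) ∧ L'.Nodup ∧ a ∉ L' ∧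
      (L' = [] → (a ∈ L ∨ L = [])) := by
  intro N
  induction N with
  | zero =>
    intro L a w hlen hch
    have : L = [] := List.length_eq_zero_iff.mp (by omega)
    subst this
    exact ⟨[], hch, by simp, by simp, by simp, fun _ => Or.inr rfl⟩
  | succ m ih =>
    intro L a w hlen hch
    by_cases haL : a ∈ L
    · obtain ⟨s, t, rfl⟩ := List.append_of_mem haL
      have hch' : List.Chain G a (s ++ a :: (t ++ [w])) := by
        simpa [List.append_assoc] using hch
      have hch2 : List.Chain G a (t ++ [w]) := (List.isChain_cons_split.mp hch').2
      have hlt : t.length ≤ m := by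
        simp [List.length_append] at hlen; omega
      obtain ⟨L', hc, hmem, hnd, hna, _⟩ := ih t a w hlt hch2
      exact ⟨L', hc, fun x hx => by simp [hmem x hx], hnd, hna, fun _ => Or.inl haL⟩
    · by_cases hnd : L.Nodup
      · exact ⟨L, hch, fun x hx => hx, hnd, haL, fun h => Or.inr h⟩
      · obtain ⟨l₁, x, l₂, rfl, hxl₂⟩ := not_nodup_split hnd
        obtain ⟨l₂a, l₂b, rfl⟩ := List.append_of_mem hxl₂
        have hch' : List.Chain G a (l₁ ++ x :: (l₂a ++ x :: (l₂b ++ [w]))) := by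
          simpa [List.append_assoc] using hch
        have h1 : List.Chain G a (l₁ ++ [x]) := (List.isChain_cons_split.mp hch').1
        have h2 : List.Chain G x (l₂a ++ x :: (l₂b ++ [w])) := (List.isChain_cons_split.mp hch').2
        have h3 : List.Chain G x (l₂b ++ [w]) := (List.isChain_cons_split.mp h2).2
        have hch2 : List.Chain G a ((l₁ ++ x :: l₂b) ++ [w]) := by
          have : List.Chain G a (l₁ ++ x :: (l₂b ++ [w])) := List.isChain_cons_split.mpr ⟨h1, h3⟩
          simpa [List.append_assoc] using this
        have hlt : (l₁ ++ x :: l₂b).length ≤ m := by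
          simp [List.length_append] at hlen ⊢; omega
        obtain ⟨L', hc, hmem, hnd', hna, hemp⟩ := ih (l₁ ++ x :: l₂b) a w hlt hch2
        refine ⟨L', hc, ?_, hnd', hna, ?_⟩
        · intro y hy
          have := hmem y hy
          simp at this ⊢
          tauto
        · intro he
          rcases hemp he with h | h
          · left
            simp at h ⊢
            tauto
          · exact absurd h (by simp)

lemma chain_shrink {L : List V} {a w : V} (hch : List.Chain G a (L ++ [w])) :
    ∃ L', List.Chain G a (L' ++ [w]) ∧ (∀ x ∈ L', x ∈ L) ∧ L'.Nodup ∧ a ∉ L' ∧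
      (L' = [] → (a ∈ L ∨ L = [])) :=
  chain_shrink_aux L.length L a w le_rfl hch

lemma chain_pathArcs {a : V} {L : List V} (h : List.Chain G a L) :
    ∀ p ∈ PathArcs (a :: L), G p.1 p.2 := by
  intro p hp
  rw [mem_pathArcs_iff] at hp
  obtain ⟨i, hi, h1, h2⟩ := hp
  have hch' : List.Chain' G (a :: L) := h
  replace hch' := List.isChain_iff_getElem.mp hch'
  have := hch' i (by simpa using hi)
  rw [h1, h2] at this
  exact this

lemma last_exit {Cp : List V} {T : Set V} :
    ∀ (W : List V) (u' : V), List.Chain' G (W ++ [u']) → (∀ x ∈ W, x ∈ Cp ∨ x ∈ T) →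
    (∃ c' ∈ Cp, ∃ L, (∀ x ∈ L, x ∈ T) ∧ List.Chain G c' (L ++ [u'])) ∨ (∀ x ∈ W, x ∈ T) := by
  intro W
  induction W with
  | nil => intro u' _ _; exact Or.inr (by simp)
  | cons x W ih =>
    intro u' hch hmem
    have hch1 : List.Chain G x (W ++ [u']) := hch
    have hch2 : List.Chain' G (W ++ [u']) := chain_imp_chain' hch1
    rcases ih u' hch2 (fun y hy => hmem y (by simp [hy])) with h | h
    · exact Or.inl h
    · rcases hmem x (by simp) with hx | hx
      · exact Or.inl ⟨x, hx, W, h, hch1⟩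
      · right
        intro y hy
        rcases List.mem_cons.mp hy with rfl | hy
        · exact hx
        · exact h y hy

end ChainLemmas
section BuildPrincipal
variable {V : Type*} {G : V → V → Prop}

lemma build_principal {P : List (List V)} {A : V → Prop} {T : Set V}
    (hT : ∀ x ∈ T, ∀ C ∈ P, x ∉ C)
    {a v : V} {L : List V}
    (hchain : List.Chain G a (L ++ [v]))
    (hL : ∀ x ∈ L, x ∈ T)
    (hA : A a) (hvT : v ∉ T)
    (hdeg : (L = [] ∨ a ∈ L) → ∀ C ∈ P, a ∉ C) :
    PrincipalFrom G P A v := by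
  obtain ⟨L', hc, hmem, hnd, hna, hemp⟩ := chain_shrink hchain
  have hL' : ∀ x ∈ L', x ∈ T := fun x hx => hL x (hmem x hx)
  have hvL' : v ∉ L' := fun h => hvT (hL' v h)
  have hsplit : a :: (L' ++ [v]) = (a :: L') ++ [v] := by simp
  refine ⟨a :: (L' ++ [v]), ⟨⟨?_, ?_, ?_, ?_⟩, ?_, ?_⟩, ⟨a, rfl, hA⟩, ?_⟩
  · simp
  · rw [hsplit, List.dropLast_concat]
    exact List.nodup_cons.mpr ⟨hna, hnd⟩
  · show (L' ++ [v]).Nodup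
    rw [List.nodup_append]
    exact ⟨hnd, by simp, by simp; exact fun x hx hxv => hvL' (hxv ▸ hx)⟩
  · exact chain_pathArcs hc
  · intro p hp C hC hpC
    have hmem2 := cycArcs_mem_s6 hpC
    rw [mem_pathArcs_iff] at hp
    obtain ⟨i, hi, h1, h2⟩ := hp
    have hlen : (a :: (L' ++ [v])).length = L'.length + 2 := by simp
    rcases Nat.lt_or_ge (i + 1) (L'.length + 1) with hc2 | hc2
    · -- p.2 ∈ L' ⊆ T
      have hp2 : p.2 ∈ L' := by
        rw [← h2]
        have he : (a :: (L' ++ [v]))[i + 1]'hi = L'[i]'(by omega) := by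
          rw [List.getElem_cons_succ]
          rw [List.getElem_append_left (by omega)]
        rw [he]
        exact List.getElem_mem _
      exact hT _ (hL' _ hp2) C hC hmem2.2
    · have hieq : i = L'.length := by omega
      rcases eq_or_ne L' [] with rfl | hLne
      · -- p.1 = a
        have hi0 : i = 0 := by simpa using hieq
        subst hi0
        have : (a :: (([] : List V) ++ [v]))[0] = a := rfl
        rw [this] at h1
        rcases hemp rfl with h | h
        · exact hdeg (Or.inr h) C hC (h1 ▸ hmem2.1)
        · exact hdeg (Or.inl h) C hC (h1 ▸ hmem2.1)
      · -- p.1 ∈ L'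
        have hipos : 1 ≤ i := by
          rcases Nat.eq_zero_or_pos i with rfl | h
          · exact absurd hieq.symm (by simpa using hLne)
          · omega
        have hp1 : p.1 ∈ L' := by
          obtain ⟨j, rfl⟩ : ∃ j, i = j + 1 := ⟨i - 1, by omega⟩
          rw [← h1]
          have he : (a :: (L' ++ [v]))[j + 1]'(by omega) = L'[j]'(by omega) := by
            rw [List.getElem_cons_succ]
            rw [List.getElem_append_left (by omega)]
          rw [he]
          exact List.getElem_mem _
        exact hT _ (hL' _ hp1) C hC hmem2.1
  · intro x hx C hC
    have : (a :: (L' ++ [v])).tail.dropLast = L' := by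
      show (L' ++ [v]).dropLast = L'
      exact List.dropLast_concat
    rw [this] at hx
    exact hT x (hL' x hx) C hC
  · rw [hsplit]
    exact List.getLast?_concat

end BuildPrincipal
section Network
variable {n : ℕ} {f : (Fin n → Bool) → Fin n → Bool} {G : Fin n → Fin n → Prop}

lemma bool_le_false {b : Bool} (h : b ≤ false) : b = false := by
  cases b
  · rfl
  · exact absurd h (by decide)

lemma bool_true_le {b : Bool} (h : true ≤ b) : b = true := by
  cases b
  · exact absurd h (by decide)
  · rfl

lemma value_eq_of_agree (hG : ∀ u v, G u v ↔ Depends f u v) {v : Fin n} {w₁ w₂ : Fin n → Bool}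
    (h : ∀ u, G u v → w₁ u = w₂ u) : f w₁ v = f w₂ v := by
  classical
  have key : ∀ (s : Finset (Fin n)) (w₁ w₂ : Fin n → Bool),
      (∀ u, w₁ u ≠ w₂ u → u ∈ s) → (∀ u, G u v → w₁ u = w₂ u) → f w₁ v = f w₂ v := by
    intro s
    induction s using Finset.induction_on with
    | empty =>
      intro w₁ w₂ hs _
      have : w₁ = w₂ := funext fun u => by
        by_contra hne
        simpa using hs u hne
      rw [this]
    | @insert a s ha ih =>
      intro w₁ w₂ hs hagree
      set w' := Function.update w₁ a (w₂ a) with hw'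
      have h1 : f w₁ v = f w' v := by
        by_cases hGa : G a v
        · have hx : w₁ a = w₂ a := hagree a hGa
          have : w' = w₁ := by
            funext u
            by_cases hu : u = a
            · subst hu; simp [hw', hx]
            · simp [hw', hu]
          rw [this]
        · by_contra hne
          exact hGa ((hG a v).mpr ⟨w₁, w', fun u hu => by simp [hw', hu], hne⟩)
      rw [h1]
      apply ih w' w₂ ?_ ?_
      · intro u hu
        by_cases hua : u = a
        · subst hua; simp [hw'] at hu
        · have : w₁ u ≠ w₂ u := by simpa [hw', hua] using hu
          have := hs u this
          rcases Finset.mem_insert.mp this with h | h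
          · exact absurd h hua
          · exact h
      · intro u hGu
        by_cases hua : u = a
        · subst hua; simp [hw']
        · simp only [hw', Function.update_of_ne hua]
          exact hagree u hGu
  exact key Finset.univ w₁ w₂ (fun u _ => Finset.mem_univ u) h

lemma value_le_of_le (hf : Monotone f) (hG : ∀ u v, G u v ↔ Depends f u v)
    {v : Fin n} {w₁ w₂ : Fin n → Bool}
    (h : ∀ u, G u v → w₁ u ≤ w₂ u) : f w₁ v ≤ f w₂ v := by
  have h1 : f (fun u => w₁ u && w₂ u) v = f w₁ v := by
    apply value_eq_of_agree hG
    intro u hu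
    have hB := h u hu
    cases hc1 : w₁ u <;> cases hc2 : w₂ u <;> simp_all
    exact absurd hB (by decide)
  rw [← h1]
  have hle : (fun u => w₁ u && w₂ u) ≤ w₂ := fun u => Bool.and_le_right _ _
  exact hf hle v

lemma diff_inclosed (hf : Monotone f) (hG : ∀ u v, G u v ↔ Depends f u v)
    {a b : Fin n → Bool} (hfa : f a = a) (hfb : f b = b)
    {v : Fin n} (hav : a v = true) (hbv : b v = false) :
    ∃ u, G u v ∧ a u = true ∧ b u = false := by
  by_contra hno
  push_neg at hno
  have h1 : f (fun u => a u && b u) v = f a v := by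
    apply value_eq_of_agree hG
    intro u hu
    have := hno u hu
    cases hc1 : a u <;> cases hc2 : b u <;> simp_all
  have h2 : f (fun u => a u && b u) v ≤ f b v := by
    have hle : (fun u => a u && b u) ≤ b := fun u => Bool.and_le_right _ _
    exact hf hle v
  rw [h1, hfa, hfb, hav, hbv] at h2
  exact absurd h2 (by simp)

lemma pred_false (hG : ∀ u v, G u v ↔ Depends f u v) (hf : Monotone f)
    {z : Fin n → Bool} (hfz : f z = z) {v : Fin n}
    (hzv : z v = false) (hnsrc : ∃ u, G u v) : ∃ u, G u v ∧ z u = false := by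
  by_contra hno
  push_neg at hno
  have h1 : f z v = f (fun _ => true) v := by
    apply value_eq_of_agree hG
    intro u hu
    cases hz : z u
    · exact absurd hz (hno u hu)
    · rfl
  have htop : f (fun _ => true) v = false := by
    rw [← h1, hfz, hzv]
  obtain ⟨u, hu⟩ := hnsrc
  obtain ⟨x, y, hagree, hne⟩ := (hG u v).mp hu
  have hx : f x v = false := by
    have : f x v ≤ f (fun _ => true) v := hf (fun w => by simp) v
    rw [htop] at this
    exact bool_le_false this
  have hy : f y v = false := by
    have : f y v ≤ f (fun _ => true) v := hf (fun w => by simp) v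
    rw [htop] at this
    exact bool_le_false this
  exact hne (hx.trans hy.symm)

lemma pred_true (hG : ∀ u v, G u v ↔ Depends f u v) (hf : Monotone f)
    {z : Fin n → Bool} (hfz : f z = z) {v : Fin n}
    (hzv : z v = true) (hnsrc : ∃ u, G u v) : ∃ u, G u v ∧ z u = true := by
  by_contra hno
  push_neg at hno
  have h1 : f z v = f (fun _ => false) v := by
    apply value_eq_of_agree hG
    intro u hu
    cases hz : z u
    · rfl
    · exact absurd hz (hno u hu)
  have hbot : f (fun _ => false) v = true := by
    rw [← h1, hfz, hzv]
  obtain ⟨u, hu⟩ := hnsrc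
  obtain ⟨x, y, hagree, hne⟩ := (hG u v).mp hu
  have hx : f x v = true := by
    have : f (fun _ => false) v ≤ f x v := hf (fun w => by simp) v
    rw [hbot] at this
    exact bool_true_le this
  have hy : f y v = true := by
    have : f (fun _ => false) v ≤ f y v := hf (fun w => by simp) v
    rw [hbot] at this
    exact bool_true_le this
  exact hne (hx.trans hy.symm)

lemma freeze_lemma (hf : Monotone f) (hG : ∀ u v, G u v ↔ Depends f u v)
    {x y : Fin n → Bool} (hfx : f x = x) (hfy : f y = y) {v p : Fin n}
    (hxp : x p = true) (hyp : y p = false)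
    (hxv : x v = true) (hyv : y v = false)
    (hnb : ∀ u, G u v → u = p ∨ (x u = false ∧ y u = true)) :
    ∀ u, G u v → u = p := by
  have hval : ∀ w : Fin n → Bool, f w v = w p := by
    intro w
    cases hwp : w p
    · have hle : f w v ≤ f y v := by
        apply value_le_of_le hf hG
        intro u hu
        rcases hnb u hu with rfl | ⟨_, hy1⟩
        · rw [hwp, hyp]
        · rw [hy1]; exact Bool.le_true _
      rw [hfy, hyv] at hle
      exact bool_le_false hle
    · have hle : f x v ≤ f w v := by
        apply value_le_of_le hf hG
        intro u hu
        rcases hnb u hu with rfl | ⟨hx0, _⟩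
        · rw [hwp, hxp]
        · rw [hx0]; exact Bool.false_le _
      rw [hfx, hxv] at hle
      exact bool_true_le hle
  intro u hu
  by_contra hne
  obtain ⟨x', y', hagree, hne'⟩ := (hG u v).mp hu
  have : x' p = y' p := hagree p (fun h => hne (h ▸ rfl))
  rw [hval x', hval y'] at hne'
  exact hne' this

lemma fixed_le_of_le_on_I (hf : Monotone f) (hG : ∀ u v, G u v ↔ Depends f u v)
    {I : Finset (Fin n)} (hI : IsFVS G I)
    {x y : Fin n → Bool} (hfx : f x = x) (hfy : f y = y)
    (hle : ∀ i ∈ I, x i ≤ y i) : x ≤ y := by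
  by_contra h
  rw [Pi.le_def] at h
  push_neg at h
  obtain ⟨v, hv⟩ := h
  have hxv : x v = true ∧ y v = false := by
    cases hc1 : x v <;> cases hc2 : y v <;> rw [hc1, hc2] at hv <;>
      first
      | exact absurd hv (by decide)
      | exact ⟨rfl, rfl⟩
  set S : Set (Fin n) := {w | x w = true ∧ y w = false} with hS
  have hne : S.Nonempty := ⟨v, hxv⟩
  have hstep : ∀ w ∈ S, ∃ u ∈ S, G u w := by
    intro w hw
    obtain ⟨u, hu, hau, hbu⟩ := diff_inclosed hf hG hfx hfy hw.1 hw.2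
    exact ⟨u, ⟨hau, hbu⟩, hu⟩
  obtain ⟨l, hcyc, hsub⟩ := exists_cycle_of_inclosed hne hstep
  obtain ⟨w, hwl, hwI⟩ := hI l hcyc
  have hwS := hsub w hwl
  have := hle w hwI
  rw [hwS.1, hwS.2] at this
  exact absurd this (by decide)

end Network
section Glue
variable {V : Type*} {G : V → V → Prop}

lemma chain_glue {a b : V} {l₁ l₂ : List V} (h₁ : List.Chain G a l₁)
    (hb : (a :: l₁).getLast (by simp) = b) (h₂ : List.Chain G b l₂) :
    List.Chain G a (l₁ ++ l₂) ∧
      (a :: (l₁ ++ l₂)).getLast (by simp) = (b :: l₂).getLast (by simp) := by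
  induction l₁ generalizing a with
  | nil =>
    have : a = b := by simpa using hb
    subst this
    exact ⟨h₂, rfl⟩
  | cons c t ih =>
    replace h₁ := List.chain_cons.mp h₁
    have hb' : (c :: t).getLast (by simp) = b := by
      rw [← hb, List.getLast_cons (by simp : (c :: t) ≠ [])]
    obtain ⟨hc, hl⟩ := ih h₁.2 hb'
    refine ⟨List.chain_cons.mpr ⟨h₁.1, hc⟩, ?_⟩
    rw [show ((c :: t) ++ l₂ : List V) = c :: (t ++ l₂) from rfl]
    rw [List.getLast_cons (by simp : (c :: (t ++ l₂)) ≠ [])]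
    exact hl

lemma chain_rel_mem {R : V → V → Prop} {Q : V → Prop} (hR : ∀ a b, R a b → Q b) :
    ∀ {a : V} {l : List V}, List.Chain R a l → ∀ x ∈ l, Q x := by
  intro a l
  induction l generalizing a with
  | nil => intro _ x hx; simp at hx
  | cons c t ih =>
    intro h x hx
    replace h := List.chain_cons.mp h
    rcases List.mem_cons.mp hx with rfl | hx
    · exact hR _ _ h.1
    · exact ih h.2 x hx

lemma rtg_prop {R : V → V → Prop} {Q : V → Prop} (hR : ∀ a b, R a b → Q a → Q b)
    {a b : V} (h : Relation.ReflTransGen R a b) (ha : Q a) : Q b := by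
  induction h with
  | refl => exact ha
  | tail _ hstep ih => exact hR _ _ hstep ih

lemma exists_last_arc {l : List V} {v : V} (hlen : 2 ≤ l.length)
    (hlast : l.getLast? = some v) :
    ∃ u, (u, v) ∈ PathArcs l := by
  rw [List.getLast?_eq_getElem?] at hlast
  have hl : l.length - 1 < l.length := by omega
  rw [List.getElem?_eq_getElem hl] at hlast
  have hv : l[l.length - 1] = v := by injection hlast
  refine ⟨l[l.length - 2]'(by omega), ?_⟩
  rw [mem_pathArcs_iff]
  refine ⟨l.length - 2, by omega, rfl, ?_⟩
  show l[l.length - 2 + 1]'(by omega) = v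
  have hidx : l.length - 2 + 1 = l.length - 1 := by omega
  rw [← hv]
  congr 1

end Glue
/-- if `I` is a feedback vertex set of the interaction graph `G` of a
monotone Boolean network `f` and the set of restrictions to `I` of the fixed points
of `f` has a special `k`-pattern, then `G` has a special packing of size `k`. -/
theorem stmt6 {n k : ℕ} (f : (Fin n → Bool) → Fin n → Bool) (hf : Monotone f)
    (G : Fin n → Fin n → Prop) (hG : ∀ u v, G u v ↔ Depends f u v)
    (I : Finset (Fin n)) (hI : IsFVS G I)
    (h : HasSpecialPattern
      {z : {v // v ∈ I} → Bool | ∃ x : Fin n → Bool, f x = x ∧ z = fun v => x v.1} k) :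
    ∃ P : List (List (Fin n)), IsSpecialPacking G P ∧ P.length = k := by
  classical
  obtain ⟨X, Y, ⟨hXinj, hYinj, hXmem, hYmem, hrel⟩, hcompl⟩ := h
  choose x hxfix hXeq using hXmem
  choose y hyfix hYeq using hYmem
  have hxIval : ∀ p (i : Fin n) (hi : i ∈ I), x p i = X p ⟨i, hi⟩ := by
    intro p i hi
    rw [hXeq p]
  have hyIval : ∀ p (i : Fin n) (hi : i ∈ I), y p i = Y p ⟨i, hi⟩ := by
    intro p i hi
    rw [hYeq p]
  have hyc : ∀ p (i : Fin n) (hi : i ∈ I), y p i = !(x p i) := by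
    intro p i hi
    rw [hyIval p i hi, hcompl p, hxIval p i hi]
  have hxy : ∀ p q, p ≠ q → x p ≤ y q := by
    intro p q hpq
    apply fixed_le_of_le_on_I hf hG hI (hxfix p) (hyfix q)
    intro i hi
    have h2 := ((hrel p q).mpr hpq) ⟨i, hi⟩
    rw [hxIval p i hi, hyIval q i hi]
    exact h2
  set D : Fin k → Set (Fin n) := fun p => {w | x p w = true ∧ y p w = false} with hD
  set U : Fin k → Set (Fin n) := fun p => {w | x p w = false ∧ y p w = true} with hU
  have hDU_disj : ∀ p w, w ∈ D p → w ∈ U p → False := by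
    intro p w h1 h2
    have hx1 : x p w = true := h1.1
    have hx2 : x p w = false := h2.1
    rw [hx1] at hx2
    exact absurd hx2 (by decide)
  have hDne : ∀ p, ∃ w, w ∈ D p := by
    intro p
    have hnle : ¬ (X p ≤ Y p) := fun hle => (hrel p p).mp hle rfl
    rw [Pi.le_def] at hnle
    push_neg at hnle
    obtain ⟨⟨i, hi⟩, hlt⟩ := hnle
    have hXY : X p ⟨i, hi⟩ = true ∧ Y p ⟨i, hi⟩ = false := by
      cases h1 : X p ⟨i, hi⟩ <;> cases h2 : Y p ⟨i, hi⟩ <;> rw [h1, h2] at hlt <;>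
        first
        | exact absurd hlt (by decide)
        | exact ⟨rfl, rfl⟩
    exact ⟨i, by rw [hxIval p i hi]; exact hXY.1, by rw [hyIval p i hi]; exact hXY.2⟩
  have hDq_sub_U : ∀ p q, p ≠ q → ∀ w ∈ D q, w ∈ U p := by
    intro p q hpq w hw
    constructor
    · have := hxy p q hpq w
      rw [hw.2] at this
      exact bool_le_false this
    · have := hxy q p (Ne.symm hpq) w
      rw [hw.1] at this
      exact bool_true_le this
  have hD_disj : ∀ p q, p ≠ q → ∀ w ∈ D p, w ∉ D q := by
    intro p q hpq w hwp hwq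
    exact hDU_disj p w hwp (hDq_sub_U p q hpq w hwq)
  have hIDU : ∀ p, ∀ i ∈ I, i ∈ D p ∨ i ∈ U p := by
    intro p i hi
    have hy := hyc p i hi
    cases hc : x p i
    · right
      exact ⟨hc, by rw [hy, hc]; rfl⟩
    · left
      exact ⟨hc, by rw [hy, hc]; rfl⟩
  have hDin : ∀ p, ∀ w ∈ D p, ∃ u ∈ D p, G u w := by
    intro p w hw
    obtain ⟨u, hGu, h1, h2⟩ := diff_inclosed hf hG (hxfix p) (hyfix p) hw.1 hw.2
    exact ⟨u, ⟨h1, h2⟩, hGu⟩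
  set SH : Fin k → Fin n → Fin n → Prop := fun p a b => G a b ∧ a ∉ U p ∧ b ∉ U p with hSH
  set AncH : Fin k → Set (Fin n) → Set (Fin n) :=
    fun p E => {u | u ∉ U p ∧ ∃ e ∈ E, Relation.ReflTransGen (SH p) u e} with hAncH
  have hfam : ∀ p, ∃ Ep : Set (Fin n), (Ep ⊆ D p ∧ Ep.Nonempty ∧ ∀ w ∈ Ep, ∃ u ∈ Ep, G u w) ∧
      ∀ E' : Set (Fin n), (E' ⊆ D p ∧ E'.Nonempty ∧ ∀ w ∈ E', ∃ u ∈ E', G u w) →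
        (AncH p Ep).ncard ≤ (AncH p E').ncard := by
    intro p
    set fam : Set (Set (Fin n)) := {Ep | Ep ⊆ D p ∧ Ep.Nonempty ∧ ∀ w ∈ Ep, ∃ u ∈ Ep, G u w}
      with hfamdef
    have hDfam : D p ∈ fam := ⟨subset_rfl, hDne p, hDin p⟩
    have hs : ((fun Ep => (AncH p Ep).ncard) '' fam).Nonempty := ⟨_, ⟨D p, hDfam, rfl⟩⟩
    obtain ⟨Ep, hEpfam, hEpval⟩ := Nat.sInf_mem hs
    refine ⟨Ep, hEpfam, fun E' hE' => ?_⟩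
    have h1 : (AncH p Ep).ncard = sInf ((fun Ep => (AncH p Ep).ncard) '' fam) := hEpval
    rw [h1]
    exact Nat.sInf_le ⟨E', hE', rfl⟩
  choose E hEfam hEmin using hfam
  have hcyc : ∀ p, ∃ l, IsCycle G l ∧ ∀ w ∈ l, w ∈ E p :=
    fun p => exists_cycle_of_inclosed (hEfam p).2.1 (hEfam p).2.2
  choose C hCcyc hCsub using hcyc
  have hCD : ∀ p, ∀ w ∈ C p, w ∈ D p := fun p w hw => (hEfam p).1 (hCsub p w hw)
  set PL : List (List (Fin n)) := List.ofFn C with hPL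
  have hPmem : ∀ Cq ∈ PL, ∃ q, C q = Cq := by
    intro Cq hq
    rw [hPL, List.mem_ofFn] at hq
    exact hq
  have hCpPL : ∀ p, C p ∈ PL := by
    intro p
    rw [hPL, List.mem_ofFn]
    exact ⟨p, rfl⟩
  refine ⟨PL, ⟨⟨?_, ?_⟩, ?_⟩, by rw [hPL]; exact List.length_ofFn⟩
  · intro l hl
    obtain ⟨p, rfl⟩ := hPmem l hl
    exact hCcyc p
  · rw [hPL, List.pairwise_ofFn]
    intro i j hij w hwi hwj
    exact hD_disj i j hij.ne w (hCD i w hwi) (hCD j w hwj)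
  -- SPECIALNESS
  intro Ci hCi v hvCi
  obtain ⟨p, rfl⟩ := hPmem Ci hCi
  have hvD : v ∈ D p := hCD p v hvCi
  have hvnotU : v ∉ U p := fun hh => hDU_disj p v hvD hh
  set T : Set (Fin n) := {w | w ∉ U p ∧ ∀ Cq ∈ PL, w ∉ Cq} with hT
  have hTP : ∀ w ∈ T, ∀ Cq ∈ PL, w ∉ Cq := fun w hw => hw.2
  have hTnotU : ∀ w ∈ T, w ∉ U p := fun w hw => hw.1
  have hCpT : ∀ w ∈ C p, w ∉ T := fun w hw hwT => hwT.2 (C p) (hCpPL p) hw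
  have hvT : v ∉ T := hCpT v hvCi
  have hDpT : ∀ w, w ∈ D p → w ∉ C p → w ∈ T := by
    intro w hwD hwC
    refine ⟨fun hh => hDU_disj p w hwD hh, ?_⟩
    intro Cq hCq hwCq
    obtain ⟨q, rfl⟩ := hPmem Cq hCq
    by_cases hqp : q = p
    · subst hqp; exact hwC hwCq
    · exact hDU_disj p w hwD (hDq_sub_U p q (Ne.symm hqp) w (hCD q w hwCq))
  have hnotUp_cases : ∀ w, w ∉ U p → w ∈ T ∨ w ∈ C p := by
    intro w hw
    by_cases hwP : ∀ Cq ∈ PL, w ∉ Cq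
    · exact Or.inl ⟨hw, hwP⟩
    · right
      push_neg at hwP
      obtain ⟨Cq, hCq, hwCq⟩ := hwP
      obtain ⟨q, rfl⟩ := hPmem Cq hCq
      by_cases hqp : q = p
      · subst hqp; exact hwCq
      · exact absurd (hDq_sub_U p q (Ne.symm hqp) w (hCD q w hwCq)) hw
  set ST : Fin n → Fin n → Prop := fun a b => G a b ∧ a ∈ T ∧ b ∈ T with hST
  set B : Set (Fin n) := {u | u ∈ T ∧ ∃ w, Relation.ReflTransGen ST u w ∧ G w v} with hB
  have hSTSH : ∀ a b, ST a b → SH p a b :=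
    fun a b hab => ⟨hab.1, hTnotU _ hab.2.1, hTnotU _ hab.2.2⟩
  set Win : Prop := PrincipalFrom G PL (fun u => u ∈ C p) v ∨ PrincipalFrom G PL (IsSource G) v
    with hWinDef
  -- the main win pipeline
  have WP : ∀ c ∈ C p, ∀ e', Relation.ReflTransGen (SH p) c e' → e' ∈ B → Win := by
    intro c hc e' hwalk he'B
    obtain ⟨he'T, w, hwwalk, hwv⟩ := he'B
    obtain ⟨l₁, hch₁, hl₁last⟩ := List.exists_isChain_cons_of_relationReflTransGen hwalk
    obtain ⟨l₂, hch₂, hl₂last⟩ := List.exists_isChain_cons_of_relationReflTransGen hwwalk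
    have hch₁G : List.Chain G c l₁ := hch₁.imp (fun a b hab => hab.1)
    have hch₂G : List.Chain G e' l₂ := hch₂.imp (fun a b hab => hab.1)
    have hl₁U : ∀ z ∈ l₁, z ∉ U p := chain_rel_mem (fun a b hab => hab.2.2) hch₁
    have hl₂T : ∀ z ∈ l₂, z ∈ T := chain_rel_mem (fun a b hab => hab.2.2) hch₂
    have hwT : w ∈ T := by
      have hmem : w ∈ e' :: l₂ := hl₂last ▸ List.getLast_mem (by simp)
      rcases List.mem_cons.mp hmem with rfl | hmem
      · exact he'T
      · exact hl₂T w hmem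
    obtain ⟨hch12, hlast12⟩ := chain_glue hch₁G hl₁last hch₂G
    have hWLlast : (c :: (l₁ ++ l₂)).getLast (by simp) = w := by rw [hlast12, hl₂last]
    have hWLsplit : (c :: (l₁ ++ l₂)).dropLast ++ [w] = c :: (l₁ ++ l₂) := by
      rw [← hWLlast]
      exact List.dropLast_append_getLast (by simp)
    have hWLmem : ∀ z ∈ c :: (l₁ ++ l₂), z ∈ C p ∨ z ∈ T := by
      intro z hz
      rcases List.mem_cons.mp hz with rfl | hz
      · exact Or.inl hc
      · rcases List.mem_append.mp hz with hh | hh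
        · rcases hnotUp_cases z (hl₁U z hh) with hT' | hC'
          · exact Or.inr hT'
          · exact Or.inl hC'
        · exact Or.inr (hl₂T z hh)
    have hWLchain' : List.Chain' G ((c :: (l₁ ++ l₂)).dropLast ++ [w]) := by
      rw [hWLsplit]
      exact hch12
    rcases last_exit (c :: (l₁ ++ l₂)).dropLast w hWLchain'
        (fun z hz => hWLmem z (List.mem_of_mem_dropLast hz)) with ⟨c', hc', L, hLT, hchain⟩ | hallT
    · left
      have hchain2 : List.Chain G c' ((L ++ [w]) ++ [v]) := by
        apply chain_snoc hchain
        have hgl : (c' :: (L ++ [w])).getLast (by simp) = w := by simp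
        rw [hgl]
        exact hwv
      apply build_principal hTP hchain2 ?_ hc' hvT ?_
      · intro z hz
        rcases List.mem_append.mp hz with hh | hh
        · exact hLT z hh
        · rw [List.mem_singleton.mp hh]; exact hwT
      · intro hcase Cq hCq hmem
        rcases hcase with hh | hh
        · exact absurd hh (by simp)
        · rcases List.mem_append.mp hh with h2 | h2
          · exact hCpT c' hc' (hLT c' h2)
          · rw [List.mem_singleton.mp h2] at hc'
            exact hCpT w hc' hwT
    · exfalso
      cases hl : l₁ ++ l₂ with
      | nil =>
        have hwc : w = c := by
          rw [← hWLlast]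
          simp [hl]
        exact hCpT c hc (hwc ▸ hwT)
      | cons a t =>
        have hcd : c ∈ (c :: (l₁ ++ l₂)).dropLast := by
          rw [hl]
          simp
        exact hCpT c hc (hallT c hcd)
  have WSource : ∀ s, IsSource G s → s ∈ B → Win := by
    intro s hs hsB
    right
    obtain ⟨hsT, w, hwalk, hwv⟩ := hsB
    obtain ⟨l₂, hch₂, hl₂last⟩ := List.exists_isChain_cons_of_relationReflTransGen hwalk
    have hch₂G : List.Chain G s l₂ := hch₂.imp (fun a b hab => hab.1)
    have hl₂T : ∀ z ∈ l₂, z ∈ T := chain_rel_mem (fun a b hab => hab.2.2) hch₂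
    have hchain2 : List.Chain G s (l₂ ++ [v]) := by
      apply chain_snoc hch₂G
      rw [hl₂last]
      exact hwv
    apply build_principal hTP hchain2 hl₂T hs hvT
    intro _ Cq hCq hmem
    exact hTP s hsT Cq hCq hmem
  have WChord : ∀ u, u ∈ C p → G u v → ((u, v) ∉ CycArcs (C p)) → Win := by
    intro u huC hGuv hnc
    left
    refine ⟨[u, v], ⟨⟨by simp, by simp, by simp, ?_⟩, ?_, ?_⟩, ⟨u, rfl, huC⟩, by simp⟩
    · intro a ha
      have : a = (u, v) := by simpa [PathArcs] using ha
      rw [this]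
      exact hGuv
    · intro a ha Cq hCq hmem
      have ha' : a = (u, v) := by simpa [PathArcs] using ha
      subst ha'
      obtain ⟨q, rfl⟩ := hPmem Cq hCq
      by_cases hqp : q = p
      · subst hqp; exact hnc hmem
      · have hu' : u ∈ C q := (cycArcs_mem_s6 hmem).1
        exact hD_disj p q (Ne.symm hqp) u (hCD p u huC) (hCD q u hu') 
    · intro z hz
      simp at hz
  by_cases hWin : Win
  · exact fun _ => hWin
  · intro hhyp
    exfalso
    -- B is in-closed
    have hBin : ∀ u ∈ B, ∃ u₁ ∈ B, G u₁ u := by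
      intro u huB
      have hu_nsrc : ¬ IsSource G u := fun hsrc => hWin (WSource u hsrc huB)
      have hex : ∃ e, G e u := by
        by_contra hno
        push_neg at hno
        exact hu_nsrc hno
      have hnotU : ∃ e, G e u ∧ e ∉ U p := by
        cases hxc : x p u
        · have hyu : y p u = false := by
            cases hc : y p u
            · rfl
            · exact absurd ⟨hxc, hc⟩ (hTnotU u huB.1)
          obtain ⟨e, hGe, hye⟩ := pred_false hG hf (hyfix p) hyu hex
          exact ⟨e, hGe, fun hU => by rw [hU.2] at hye; exact absurd hye (by decide)⟩
        · obtain ⟨e, hGe, hxe⟩ := pred_true hG hf (hxfix p) hxc hex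
          exact ⟨e, hGe, fun hU => by rw [hU.1] at hxe; exact absurd hxe (by decide)⟩
      obtain ⟨e, hGe, heU⟩ := hnotU
      rcases hnotUp_cases e heU with heT | heC
      · refine ⟨e, ⟨heT, ?_⟩, hGe⟩
        obtain ⟨huT, w, hwalk, hwv⟩ := huB
        exact ⟨w, Relation.ReflTransGen.head ⟨hGe, heT, huT⟩ hwalk, hwv⟩
      · exact absurd (WP e heC u (Relation.ReflTransGen.single
          ⟨hGe, heU, hTnotU u huB.1⟩) huB) hWin
    -- B is empty
    have hBempty : ∀ u, u ∉ B := by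
      intro u₀ hu₀
      obtain ⟨Z, hZcyc, hZsub⟩ := exists_cycle_of_inclosed ⟨u₀, hu₀⟩ hBin
      obtain ⟨z, hzZ, hzI⟩ := hI Z hZcyc
      have hzB : z ∈ B := hZsub z hzZ
      have hzD : z ∈ D p := by
        rcases hIDU p z hzI with hh | hh
        · exact hh
        · exact absurd hh (hTnotU z hzB.1)
      set A₀ : Set (Fin n) := {w | w ∈ D p ∧ w ∉ C p ∧ Relation.ReflTransGen ST w z} with hA₀
      have hzA₀ : z ∈ A₀ := ⟨hzD, fun hc => hCpT z hc hzB.1, Relation.ReflTransGen.refl⟩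
      have hA₀B : ∀ w ∈ A₀, w ∈ B := by
        intro w hw
        have hwT : w ∈ T := hDpT w hw.1 hw.2.1
        obtain ⟨hzT, w₂, hwalk₂, hw₂v⟩ := hzB
        exact ⟨hwT, w₂, hw.2.2.trans hwalk₂, hw₂v⟩
      have hA₀fam : A₀ ⊆ D p ∧ A₀.Nonempty ∧ ∀ w ∈ A₀, ∃ u ∈ A₀, G u w := by
        refine ⟨fun w hw => hw.1, ⟨z, hzA₀⟩, ?_⟩
        intro w hw
        obtain ⟨u, huD, hGu⟩ := hDin p w hw.1
        by_cases huC : u ∈ C p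
        · exact absurd (WP u huC w (Relation.ReflTransGen.single
            ⟨hGu, fun hU => hDU_disj p u huD hU, fun hU => hDU_disj p w hw.1 hU⟩)
            (hA₀B w hw)) hWin
        · have huT : u ∈ T := hDpT u huD huC
          exact ⟨u, ⟨huD, huC,
            Relation.ReflTransGen.head ⟨hGu, huT, hDpT w hw.1 hw.2.1⟩ hw.2.2⟩, hGu⟩
      have hsub : AncH p A₀ ⊆ AncH p (E p) := by
        intro u hu
        obtain ⟨huU, e', he'A₀, hwalk⟩ := hu
        refine ⟨huU, v, hCsub p v hvCi, ?_⟩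
        have h1 : Relation.ReflTransGen (SH p) e' z :=
          Relation.ReflTransGen.mono hSTSH _ _ he'A₀.2.2
        obtain ⟨hzT, w₂, hwalk₂, hw₂v⟩ := hzB
        have h2 : Relation.ReflTransGen (SH p) z w₂ :=
          Relation.ReflTransGen.mono hSTSH _ _ hwalk₂
        have hw₂T : w₂ ∈ T := rtg_prop (fun a b hab _ => hab.2.2) hwalk₂ hzT
        have h3 : SH p w₂ v := ⟨hw₂v, hTnotU w₂ hw₂T, hvnotU⟩
        exact hwalk.trans (h1.trans (h2.trans (Relation.ReflTransGen.single h3)))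
      have hle := hEmin p A₀ hA₀fam
      have heq : AncH p A₀ = AncH p (E p) :=
        Set.eq_of_subset_of_ncard_le hsub hle (Set.toFinite _)
      have hCne : C p ≠ [] := (hCcyc p).1
      have hcE : (C p).head hCne ∈ AncH p (E p) := by
        have hch : (C p).head hCne ∈ C p := List.head_mem hCne
        exact ⟨fun hU => hDU_disj p _ (hCD p _ hch) hU, _, hCsub p _ hch,
          Relation.ReflTransGen.refl⟩
      rw [← heq] at hcE
      obtain ⟨-, e', he'A₀, hwalk⟩ := hcE
      exact hWin (WP _ (List.head_mem hCne) e' hwalk (hA₀B e' he'A₀))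
    -- every in-neighbour of v not in U p gives a cycle arc
    have hnotUparc : ∀ u, G u v → u ∉ U p → (u, v) ∈ CycArcs (C p) := by
      intro u hGuv huU
      rcases hnotUp_cases u huU with huT | huC
      · exact absurd (⟨huT, u, Relation.ReflTransGen.refl, hGuv⟩ : u ∈ B) (hBempty u)
      · by_contra hnc
        exact hWin (WChord u huC hGuv hnc)
    -- the unique predecessor and the freeze lemma
    obtain ⟨pr, hprC, hprArc⟩ := cycArcs_pred_exists (hCcyc p).1 hvCi
    have hprD : pr ∈ D p := hCD p pr hprC
    have hfreeze : ∀ u, G u v → u = pr := by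
      apply freeze_lemma hf hG (hxfix p) (hyfix p) hprD.1 hprD.2 hvD.1 hvD.2
      intro u hGuv
      by_cases huU : u ∈ U p
      · exact Or.inr ⟨huU.1, huU.2⟩
      · exact Or.inl (cycArcs_pred_unique (hCcyc p).2.1 (hnotUparc u hGuv huU) hprArc)
    have hpredall : ∀ u, G u v → (u, v) ∈ CycArcs (C p) :=
      fun u hu => (hfreeze u hu) ▸ hprArc
    -- contradict the principal path from Cj
    obtain ⟨Cj, hCjP, hCjne, hprin⟩ := hhyp
    obtain ⟨l, ⟨⟨hlen2, hnd1, hnd2, harcs⟩, hnotcyc, hintern⟩, hhead, hlast⟩ := hprin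
    obtain ⟨u, hu⟩ := exists_last_arc hlen2 hlast
    have hGuv : G u v := harcs (u, v) hu
    exact hnotcyc (u, v) hu (C p) (hCpPL p) (hpredall u hGuv)
end
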